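/- arXiv:1502.05666 — 13 statements merged into one kernel-verified Lean document; each statement's English description precedes it below -/
import Mathlib

section
/- Let I be a finite index set and let (x_i, g_i, f_i) for i ∈ I be triples with x_i, g_i ∈ ℝ^d and f_i ∈ ℝ. There exists a convex function f : ℝ^d → ℝ such that f(x_i) = f_i and g_i is a subgradient of f at x_i for every i ∈ I if and only if f_i ≥ f_j + ⟨g_j, x_i − x_j⟩ holds for all i, j ∈ I. -/
open scoped RealInnerProductSpace

/-- **Convex interpolation** (Theorem 1 of the paper).
A finite set of triples `(x i, g i, f i)` can be interpolated by a convex function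
`f : ℝ^d → ℝ` (with `g i` a subgradient of `f` at `x i` and `f (x i) = f i`)
iff the subgradient inequalities hold between all pairs of data points. -/
theorem convex_interpolation {d : ℕ} {ι : Type*} [Fintype ι]
    (x g : ι → EuclideanSpace ℝ (Fin d)) (fv : ι → ℝ) :
    (∃ f : EuclideanSpace ℝ (Fin d) → ℝ,
        ConvexOn ℝ Set.univ f ∧
        (∀ i, f (x i) = fv i) ∧
        (∀ i, ∀ y : EuclideanSpace ℝ (Fin d), f y ≥ f (x i) + ⟪g i, y - x i⟫)) ↔
      (∀ i j, fv i ≥ fv j + ⟪g j, x i - x j⟫) := by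
  constructor
  · rintro ⟨f, _, hval, hsub⟩ i j
    have := hsub j (x i)
    rw [hval i, hval j] at this
    exact this
  · intro h
    rcases isEmpty_or_nonempty ι with hι | hι
    · exact ⟨fun _ => 0, convexOn_const 0 convex_univ,
        fun i => hι.elim i, fun i => hι.elim i⟩
    · have hne : (Finset.univ : Finset ι).Nonempty := Finset.univ_nonempty
      set f : EuclideanSpace ℝ (Fin d) → ℝ :=
        fun y => Finset.univ.sup' hne (fun j => fv j + ⟪g j, y - x j⟫) with hf
      have hle : ∀ j y, fv j + ⟪g j, y - x j⟫ ≤ f y := fun j y =>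
        Finset.le_sup' (fun j => fv j + ⟪g j, y - x j⟫) (Finset.mem_univ j)
      have hval : ∀ i, f (x i) = fv i := by
        intro i
        apply le_antisymm
        · apply Finset.sup'_le
          intro j _
          exact h i j
        · have := hle i (x i)
          simpa using this
      refine ⟨f, ⟨convex_univ, ?_⟩, hval, ?_⟩
      · intro p _ q _ a b ha hb hab
        apply Finset.sup'_le
        intro j _
        have key : (a • p + b • q) - x j = a • (p - x j) + b • (q - x j) := by
          rw [smul_sub, smul_sub,
            show a • p - a • x j + (b • q - b • x j) = a • p + b • q - (a + b) • x j by module,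
            hab, one_smul]
        rw [key, inner_add_right, real_inner_smul_right, real_inner_smul_right]
        have h1 := hle j p
        have h2 := hle j q
        simp only [smul_eq_mul]
        have hfv : a * fv j + b * fv j = fv j := by rw [← add_mul, hab, one_mul]
        linarith [mul_le_mul_of_nonneg_left h1 ha, mul_le_mul_of_nonneg_left h2 hb]
      · intro i y
        rw [hval i]
        exact hle i y
end

section
/- Let I be a nonempty finite index set and let (x_i, g_i, f_i) for i ∈ I be triples with x_i, g_i ∈ ℝ^d and f_i ∈ ℝ satisfying f_i ≥ f_j + ⟨g_j, x_i − x_j⟩ for all i, j ∈ I. Then the function f : ℝ^d → ℝ defined by f(x) = max_{j ∈ I} ( f_j + ⟨g_j, x − x_j⟩ ) is convex, satisfies f(x_i) = f_i for every i ∈ I, and g_i is a subgradient of f at x_i for every i ∈ I. -/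
open scoped RealInnerProductSpace

open Finset

theorem ConvexOn.finset_sup' {𝕜 E β ι : Type*} [Semiring 𝕜] [PartialOrder 𝕜] [AddCommMonoid E]
    [AddCommMonoid β] [LinearOrder β] [IsOrderedAddMonoid β] [SMul 𝕜 E] [Module 𝕜 β]
    [PosSMulStrictMono 𝕜 β] {s : Set E} {t : Finset ι} (H : t.Nonempty) {f : ι → E → β}
    (hf : ∀ i ∈ t, ConvexOn 𝕜 s (f i)) :
    ConvexOn 𝕜 s fun y => t.sup' H fun i => f i y :=
  (sup'_induction H f (fun _ h₁ _ h₂ => h₁.sup h₂) hf).congr fun y _ => Finset.sup'_apply H f y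

theorem convexOn_const_add_inner_sub {E : Type*} [NormedAddCommGroup E] [InnerProductSpace ℝ E]
    (c : ℝ) (v p : E) : ConvexOn ℝ Set.univ fun y => c + ⟪v, y - p⟫ :=
  ((innerₛₗ ℝ v).convexOn convex_univ |>.add_const (c - ⟪v, p⟫)).congr fun y _ => by
    simp only [Pi.add_apply, innerₛₗ_apply_apply, inner_sub_right]
    ring

section MaxAffine

variable {E ι : Type*} [NormedAddCommGroup E] [InnerProductSpace ℝ E] [Fintype ι] [Nonempty ι]
  (x g : ι → E) (fv : ι → ℝ)

noncomputable def maxAffine (y : E) : ℝ :=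
  univ.sup' univ_nonempty fun j => fv j + ⟪g j, y - x j⟫

theorem convexOn_maxAffine : ConvexOn ℝ Set.univ (maxAffine x g fv) :=
  ConvexOn.finset_sup' _ fun j _ => convexOn_const_add_inner_sub (fv j) (g j) (x j)

theorem le_maxAffine (i : ι) (y : E) : fv i + ⟪g i, y - x i⟫ ≤ maxAffine x g fv y :=
  le_sup' (fun j => fv j + ⟪g j, y - x j⟫) (mem_univ i)

variable {x g fv}

theorem maxAffine_apply_self (h : ∀ i j, fv i ≥ fv j + ⟪g j, x i - x j⟫) (i : ι) :
    maxAffine x g fv (x i) = fv i :=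
  le_antisymm (sup'_le _ _ fun j _ => h i j) (by simpa using le_maxAffine x g fv i (x i))

end MaxAffine

/-- The explicit piecewise-linear interpolating function from the sufficiency part of
Theorem 1 of the paper: under the subgradient inequalities between the data points,
`F y = max_j (f j + ⟪g j, y - x j⟫)` is convex, interpolates the function values,
and admits `g i` as a subgradient at `x i`. -/
theorem convex_interpolation_construction {d : ℕ} {ι : Type*} [Fintype ι] [Nonempty ι]
    (x g : ι → EuclideanSpace ℝ (Fin d)) (fv : ι → ℝ)
    (h : ∀ i j, fv i ≥ fv j + ⟪g j, x i - x j⟫) :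
    ConvexOn ℝ Set.univ
        (fun y : EuclideanSpace ℝ (Fin d) =>
          Finset.univ.sup' Finset.univ_nonempty (fun j => fv j + ⟪g j, y - x j⟫)) ∧
      (∀ i, (Finset.univ.sup' Finset.univ_nonempty (fun j => fv j + ⟪g j, x i - x j⟫)) = fv i) ∧
      (∀ i, ∀ y : EuclideanSpace ℝ (Fin d),
        Finset.univ.sup' Finset.univ_nonempty (fun j => fv j + ⟪g j, y - x j⟫) ≥
          Finset.univ.sup' Finset.univ_nonempty (fun j => fv j + ⟪g j, x i - x j⟫)
            + ⟪g i, y - x i⟫) := by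
  refine ⟨convexOn_maxAffine x g fv, maxAffine_apply_self h, fun i y => ?_⟩
  change maxAffine x g fv (x i) + ⟪g i, y - x i⟫ ≤ maxAffine x g fv y
  rw [maxAffine_apply_self h]
  exact le_maxAffine x g fv i y
end

section
/- Let 0 ≤ μ < L < ∞ and let f : ℝ^d → ℝ be differentiable. Then f is convex, its gradient ∇f is L-Lipschitz, and x ↦ f(x) − (μ/2)‖x‖² is convex, if and only if the function g defined by g(x) = f(x) − (μ/2)‖x‖² is convex, differentiable, and its gradient ∇g is (L−μ)-Lipschitz. -/
open scoped RealInnerProductSpace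

/-!
Write `g = f - (μ/2)‖·‖²`, so that `∇g = ∇f - μ • id`. Backwards, `f = g + (μ/2)‖·‖²` is convex
and the triangle inequality bounds the Lipschitz constant of `∇f` by `(L - μ) + μ`. Forwards,
Cauchy–Schwarz makes the gradient of `(L/2)‖·‖² - f = ((L-μ)/2)‖·‖² - g` monotone, so this
function is convex. A convex `g` for which `(K/2)‖·‖² - g` is also convex lies between its tangent
planes and the quadratic upper bounds `g x + ⟪∇g x, y - x⟫ + (K/2)‖y - x‖²`; comparing the two at
the gradient step `y - K⁻¹ (∇g y - ∇g x)` gives the co-coercivity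
`‖∇g x - ∇g y‖² ≤ K ⟪∇g x - ∇g y, x - y⟫`, hence the `K`-Lipschitz bound.
-/

open Set AffineMap

variable {E : Type*} [NormedAddCommGroup E] [InnerProductSpace ℝ E] [CompleteSpace E]

theorem HasGradientAt.sub {f g : E → ℝ} {f' g' x : E} (hf : HasGradientAt f f' x)
    (hg : HasGradientAt g g' x) : HasGradientAt (fun y => f y - g y) (f' - g') x := by
  rw [hasGradientAt_iff_hasFDerivAt, map_sub]
  exact hf.hasFDerivAt.sub hg.hasFDerivAt

theorem hasGradientAt_half_mul_norm_sq (c : ℝ) (x : E) :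
    HasGradientAt (fun y : E => c / 2 * ‖y‖ ^ 2) (c • x) x := by
  rw [hasGradientAt_iff_hasFDerivAt]
  refine ((hasStrictFDerivAt_norm_sq x).hasFDerivAt.const_mul (c / 2)).congr_fderiv ?_
  ext v
  simp
  ring

theorem HasGradientAt.hasDerivAt_comp_lineMap {h : E → ℝ} {h' x y : E} {t : ℝ}
    (hh : HasGradientAt h h' (lineMap x y t)) :
    HasDerivAt (h ∘ (lineMap x y : ℝ → E)) ⟪h', y - x⟫ t :=
  hh.hasFDerivAt.comp_hasDerivAt t hasDerivAt_lineMap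

theorem ConvexOn.add_inner_le_of_hasGradientAt {h : E → ℝ} {h' x : E}
    (hc : ConvexOn ℝ univ h) (hh : HasGradientAt h h' x) (y : E) :
    h x + ⟪h', y - x⟫ ≤ h y := by
  have hline : ConvexOn ℝ univ (h ∘ (lineMap x y : ℝ → E)) := by
    simpa using hc.comp_affineMap (lineMap x y)
  have hderiv : HasDerivAt (h ∘ (lineMap x y : ℝ → E)) ⟪h', y - x⟫ 0 :=
    HasGradientAt.hasDerivAt_comp_lineMap (by simpa using hh)
  have := hline.le_slope_of_hasDerivAt (mem_univ 0) (mem_univ 1) one_pos hderiv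
  simp only [slope_def_field, Function.comp_apply, lineMap_apply_zero, lineMap_apply_one] at this
  linarith

theorem convexOn_univ_of_monotone_gradient {h : E → ℝ} {h' : E → E}
    (hh : ∀ x, HasGradientAt h (h' x) x) (hmono : ∀ x y, 0 ≤ ⟪h' x - h' y, x - y⟫) :
    ConvexOn ℝ univ h := by
  refine ⟨convex_univ, fun x _ y _ a b ha hb hab => ?_⟩
  have hderiv : ∀ t, HasDerivAt (h ∘ (lineMap x y : ℝ → E)) ⟪h' (lineMap x y t), y - x⟫ t :=
    fun t => (hh _).hasDerivAt_comp_lineMap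
  have hline : ConvexOn ℝ univ (h ∘ (lineMap x y : ℝ → E)) := by
    refine Monotone.convexOn_univ_of_deriv (fun t => (hderiv t).differentiableAt) ?_
    intro s t hst
    rw [(hderiv s).deriv, (hderiv t).deriv, ← sub_nonneg, ← inner_sub_left]
    rcases hst.eq_or_lt with rfl | hlt
    · simp
    have hsub : lineMap x y t - lineMap x y s = (t - s) • (y - x) := by
      rw [lineMap_apply_module', lineMap_apply_module', add_sub_add_right_eq_sub, sub_smul]
    have := hmono (lineMap x y t) (lineMap x y s)
    rw [hsub, real_inner_smul_right] at this
    exact (mul_nonneg_iff_of_pos_left (sub_pos.2 hlt)).1 this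
  have := hline.2 (mem_univ 0) (mem_univ 1) ha hb hab
  have hba : 1 - b = a := by linarith
  simpa [lineMap_apply_module, hba] using this

theorem ConvexOn.le_add_inner_add_half_mul_norm_sq {g : E → ℝ} {g' x : E} {K : ℝ}
    (hq : ConvexOn ℝ univ fun z => K / 2 * ‖z‖ ^ 2 - g z) (hg : HasGradientAt g g' x) (y : E) :
    g y ≤ g x + ⟪g', y - x⟫ + K / 2 * ‖y - x‖ ^ 2 := by
  have := hq.add_inner_le_of_hasGradientAt ((hasGradientAt_half_mul_norm_sq K x).sub hg) y
  rw [inner_sub_left, real_inner_smul_left, inner_sub_right, real_inner_self_eq_norm_sq] at this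
  rw [norm_sub_sq_real, real_inner_comm x y]
  linarith

section Cocoercive

variable {g : E → ℝ} {g' : E → E} {K : ℝ}

theorem ConvexOn.norm_sub_sq_div_le_sub_sub_inner (hK : 0 < K) (hc : ConvexOn ℝ univ g)
    (hq : ConvexOn ℝ univ fun z => K / 2 * ‖z‖ ^ 2 - g z) (hg : ∀ x, HasGradientAt g (g' x) x)
    (x y : E) :
    ‖g' y - g' x‖ ^ 2 / (2 * K) ≤ g y - g x - ⟪g' x, y - x⟫ := by
  set u := g' y - g' x
  set z := y - K⁻¹ • u
  have hlower := hc.add_inner_le_of_hasGradientAt (hg x) z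
  have hupper := hq.le_add_inner_add_half_mul_norm_sq (hg y) z
  have hzx : z - x = (y - x) - K⁻¹ • u := by simp only [z]; abel
  have hzy : z - y = -(K⁻¹ • u) := by simp only [z]; abel
  rw [hzx, inner_sub_right, real_inner_smul_right] at hlower
  rw [hzy, inner_neg_right, real_inner_smul_right, norm_neg, norm_smul, mul_pow,
    Real.norm_eq_abs, sq_abs] at hupper
  have hu : K⁻¹ * ⟪g' y, u⟫ - K⁻¹ * ⟪g' x, u⟫ = K⁻¹ * ‖u‖ ^ 2 := by
    rw [← mul_sub, ← inner_sub_left, real_inner_self_eq_norm_sq]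
  have hcoef : K⁻¹ * ‖u‖ ^ 2 - K / 2 * (K⁻¹ ^ 2 * ‖u‖ ^ 2) = ‖u‖ ^ 2 / (2 * K) := by
    field_simp; ring
  linarith

theorem ConvexOn.norm_sub_sq_div_le_inner (hK : 0 < K) (hc : ConvexOn ℝ univ g)
    (hq : ConvexOn ℝ univ fun z => K / 2 * ‖z‖ ^ 2 - g z) (hg : ∀ x, HasGradientAt g (g' x) x)
    (x y : E) :
    ‖g' x - g' y‖ ^ 2 / K ≤ ⟪g' x - g' y, x - y⟫ := by
  have hxy := hc.norm_sub_sq_div_le_sub_sub_inner hK hq hg x y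
  have hyx := hc.norm_sub_sq_div_le_sub_sub_inner hK hq hg y x
  rw [norm_sub_rev] at hxy
  have hsplit : ⟪g' x - g' y, x - y⟫ = -⟪g' x, y - x⟫ - ⟪g' y, x - y⟫ := by
    rw [inner_sub_left, ← neg_sub y x, inner_neg_right]
  have hhalf : ‖g' x - g' y‖ ^ 2 / (2 * K) + ‖g' x - g' y‖ ^ 2 / (2 * K)
      = ‖g' x - g' y‖ ^ 2 / K := by ring
  linarith

theorem ConvexOn.norm_sub_le_mul_norm_sub (hK : 0 < K) (hc : ConvexOn ℝ univ g)
    (hq : ConvexOn ℝ univ fun z => K / 2 * ‖z‖ ^ 2 - g z) (hg : ∀ x, HasGradientAt g (g' x) x)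
    (x y : E) :
    ‖g' x - g' y‖ ≤ K * ‖x - y‖ := by
  have hco := (hc.norm_sub_sq_div_le_inner hK hq hg x y).trans (real_inner_le_norm _ _)
  rw [div_le_iff₀ hK, sq, mul_assoc] at hco
  rw [mul_comm K]
  rcases (norm_nonneg (g' x - g' y)).eq_or_lt with h0 | hpos
  · rw [← h0]; positivity
  · exact le_of_mul_le_mul_left hco hpos

end Cocoercive

theorem convexOn_half_mul_norm_sq_sub_of_lipschitz {f : E → ℝ} {f' : E → E} {L : ℝ}
    (hf : ∀ x, HasGradientAt f (f' x) x) (hL : ∀ x y, ‖f' x - f' y‖ ≤ L * ‖x - y‖) :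
    ConvexOn ℝ univ fun x => L / 2 * ‖x‖ ^ 2 - f x := by
  refine convexOn_univ_of_monotone_gradient
    (fun x => (hasGradientAt_half_mul_norm_sq L x).sub (hf x)) fun x y => ?_
  have hrw : L • x - f' x - (L • y - f' y) = L • (x - y) - (f' x - f' y) := by
    rw [smul_sub]; abel_nf
  rw [hrw, inner_sub_left, real_inner_smul_left, real_inner_self_eq_norm_sq, sub_nonneg]
  calc ⟪f' x - f' y, x - y⟫ ≤ ‖f' x - f' y‖ * ‖x - y‖ := real_inner_le_norm _ _
    _ ≤ L * ‖x - y‖ * ‖x - y‖ := by gcongr; exact hL x y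
    _ = L * ‖x - y‖ ^ 2 := by ring

/-- Theorem 3 of the paper (minimal curvature subtraction, finite `L`):
a differentiable `f : ℝ^d → ℝ` is `L`-smooth and `μ`-strongly convex iff
`g = f - (μ/2)‖·‖²` is convex, differentiable, with `(L-μ)`-Lipschitz gradient. -/
theorem smooth_strongly_convex_iff_curvature_subtraction {d : ℕ} (μ L : ℝ)
    (hμ : 0 ≤ μ) (hμL : μ < L)
    (f : EuclideanSpace ℝ (Fin d) → ℝ) (hf : Differentiable ℝ f) :
    (ConvexOn ℝ Set.univ f ∧
      (∀ x y, ‖gradient f x - gradient f y‖ ≤ L * ‖x - y‖) ∧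
      ConvexOn ℝ Set.univ (fun x => f x - μ / 2 * ‖x‖ ^ 2)) ↔
    (ConvexOn ℝ Set.univ (fun x => f x - μ / 2 * ‖x‖ ^ 2) ∧
      Differentiable ℝ (fun x : EuclideanSpace ℝ (Fin d) => f x - μ / 2 * ‖x‖ ^ 2) ∧
      (∀ x y, ‖gradient (fun x => f x - μ / 2 * ‖x‖ ^ 2) x
          - gradient (fun x => f x - μ / 2 * ‖x‖ ^ 2) y‖ ≤ (L - μ) * ‖x - y‖)) := by
  have hg : ∀ x, HasGradientAt (fun x => f x - μ / 2 * ‖x‖ ^ 2) (gradient f x - μ • x) x :=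
    fun x => (hf x).hasGradientAt.sub (hasGradientAt_half_mul_norm_sq μ x)
  simp only [fun x => (hg x).gradient]
  refine ⟨fun ⟨_, hfL, hgc⟩ => ⟨hgc, fun x => (hg x).differentiableAt, ?_⟩,
    fun ⟨hgc, _, hgL⟩ => ⟨?_, fun x y => ?_, hgc⟩⟩
  · have hq : ConvexOn ℝ univ fun x => (L - μ) / 2 * ‖x‖ ^ 2 - (f x - μ / 2 * ‖x‖ ^ 2) :=
      (convexOn_half_mul_norm_sq_sub_of_lipschitz (fun x => (hf x).hasGradientAt) hfL).congr
        fun x _ => by ring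
    exact hgc.norm_sub_le_mul_norm_sub (sub_pos.2 hμL) hq hg
  · exact strongConvexOn_zero.1 ((strongConvexOn_iff_convex.2 hgc).mono hμ)
  · calc ‖gradient f x - gradient f y‖
        = ‖(gradient f x - μ • x - (gradient f y - μ • y)) + μ • (x - y)‖ := by
          rw [smul_sub]; abel_nf
      _ ≤ (L - μ) * ‖x - y‖ + μ * ‖x - y‖ := by
          grw [norm_add_le, hgL x y, norm_smul, Real.norm_of_nonneg hμ]
      _ = L * ‖x - y‖ := by ring
end

section
/- Let 0 ≤ μ < L < ∞, let I be a finite index set, and let (x_i, g_i, f_i) for i ∈ I be triples with x_i, g_i ∈ ℝ^d and f_i ∈ ℝ. Then the set {(x_i, g_i, f_i)}_{i∈I} is F_{μ,L}-interpolable if and only if for every pair of indices i, j ∈ I: f_i − f_j − ⟨g_j, x_i − x_j⟩ ≥ (1/(2(1 − μ/L))) · ( (1/L)‖g_i − g_j‖² + μ‖x_i − x_j‖² − (2μ/L)⟨g_j − g_i, x_j − x_i⟩ ). -/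
/-!
Subtracting `μ / 2 * ‖·‖ ^ 2` maps `F_{μ,L}` onto `F_{0,L-μ}`, and turns the interpolation
inequality into the cocoercivity inequality
`h j + ⟪s j, x i - x j⟫ + ‖s i - s j‖ ^ 2 / (2 * (L - μ)) ≤ h i` for the shifted data, so it
suffices to treat `μ = 0`. There, necessity is cocoercivity of a convex function with Lipschitz
gradient, which follows from its tangent planes lying below it and its tangent parabolas above it.
For sufficiency, the data give parabolas `q i w = f i + ⟪g i, w - x i⟫ + L / 2 * ‖w - x i‖ ^ 2`,
and the interpolant is the largest convex function below all of them: the minimum over the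
simplex of averaged parabolas. The pairwise inequalities say precisely that the tangent plane at
each data point lies below every `q j`, which pins down the values and gradients at the `x i`.
-/

open scoped RealInnerProductSpace

/-- `f : ℝ^d → ℝ` belongs to the class `F_{μ,L}` (for finite `L`): it is differentiable,
its gradient is `L`-Lipschitz, and `f - (μ/2)‖·‖²` is convex. -/
def SmoothStronglyConvex {d : ℕ} (μ L : ℝ) (f : EuclideanSpace ℝ (Fin d) → ℝ) : Prop :=
  Differentiable ℝ f ∧
  (∀ x y, ‖gradient f x - gradient f y‖ ≤ L * ‖x - y‖) ∧
  ConvexOn ℝ Set.univ (fun x => f x - μ / 2 * ‖x‖ ^ 2)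

/-- The set of triples `(x i, g i, f i)` is `F_{μ,L}`-interpolable. -/
def Interpolable {d : ℕ} {ι : Type*} (μ L : ℝ)
    (x g : ι → EuclideanSpace ℝ (Fin d)) (fv : ι → ℝ) : Prop :=
  ∃ f : EuclideanSpace ℝ (Fin d) → ℝ, SmoothStronglyConvex μ L f ∧
    ∀ i, f (x i) = fv i ∧ gradient f (x i) = g i

section QuadraticBounds

variable {E : Type*} [NormedAddCommGroup E] [InnerProductSpace ℝ E]

lemma norm_sq_eq_norm_sq_add_inner_add (z w : E) :
    ‖w‖ ^ 2 = ‖z‖ ^ 2 + 2 * ⟪z, w - z⟫ + ‖w - z‖ ^ 2 := by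
  have : w = z + (w - z) := by abel
  conv_lhs => rw [this]
  exact norm_add_sq_real z (w - z)

lemma real_inner_le_half_mul_norm_sq_add {M : ℝ} (hM : 0 < M) (v u : E) :
    ⟪v, u⟫ ≤ M / 2 * ‖u‖ ^ 2 + ‖v‖ ^ 2 / (2 * M) := by
  have hsq : 0 ≤ M / 2 * ‖u - M⁻¹ • v‖ ^ 2 := by positivity
  have e : M / 2 * ‖u - M⁻¹ • v‖ ^ 2 = M / 2 * ‖u‖ ^ 2 - ⟪v, u⟫ + ‖v‖ ^ 2 / (2 * M) := by
    rw [norm_sub_sq_real, real_inner_smul_right, norm_smul, Real.norm_eq_abs,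
      abs_of_pos (inv_pos.2 hM), real_inner_comm]
    field_simp
  linarith

lemma add_inner_le_add_inner_add_half_mul_norm_sq {M : ℝ} (hM : 0 < M) {fa fb : ℝ} {a b p q : E}
    (h : fb + ⟪q, a - b⟫ + ‖p - q‖ ^ 2 / (2 * M) ≤ fa) (z : E) :
    fb + ⟪q, z - b⟫ ≤ fa + ⟪p, z - a⟫ + M / 2 * ‖z - a‖ ^ 2 := by
  have hyoung := real_inner_le_half_mul_norm_sq_add hM (q - p) (z - a)
  have e : ⟪q, z - b⟫ = ⟪q - p, z - a⟫ + ⟪p, z - a⟫ + ⟪q, a - b⟫ := by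
    rw [inner_sub_left, sub_add_cancel, ← inner_add_right, sub_add_sub_cancel]
  rw [norm_sub_rev q p] at hyoung
  linarith

lemma hasGradientAt_of_le_of_le [CompleteSpace E] {f : E → ℝ} {s x : E} {M : ℝ}
    (hl : ∀ z, f x + ⟪s, z - x⟫ ≤ f z)
    (hu : ∀ z, f z ≤ f x + ⟪s, z - x⟫ + M / 2 * ‖z - x‖ ^ 2) :
    HasGradientAt f s x := by
  rw [hasGradientAt_iff_isLittleO]
  refine (Asymptotics.isBigO_of_le' (c := |M| / 2) _ fun z => ?_).trans_isLittleO
    (Asymptotics.isLittleO_pow_sub_sub x one_lt_two)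
  have hl' := hl z
  have hu' := hu z
  have hM : M / 2 * ‖z - x‖ ^ 2 ≤ |M| / 2 * ‖z - x‖ ^ 2 := by gcongr; exact le_abs_self M
  have hpos : 0 ≤ |M| / 2 * ‖z - x‖ ^ 2 := by positivity
  rw [Real.norm_eq_abs, Real.norm_eq_abs, abs_of_nonneg (sq_nonneg ‖z - x‖), abs_le]
  constructor <;> linarith

/-- The first-order description of a convex function with `M`-Lipschitz gradient `s`. -/
def HasQuadraticBounds (M : ℝ) (h : E → ℝ) (s : E → E) : Prop :=
  ∀ z w, h z + ⟪s z, w - z⟫ ≤ h w ∧ h w ≤ h z + ⟪s z, w - z⟫ + M / 2 * ‖w - z‖ ^ 2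

namespace HasQuadraticBounds

variable {M : ℝ} {h : E → ℝ} {s : E → E}

lemma hasGradientAt [CompleteSpace E] (hb : HasQuadraticBounds M h s) (z : E) :
    HasGradientAt h (s z) z :=
  hasGradientAt_of_le_of_le (fun w => (hb z w).1) (fun w => (hb z w).2)

lemma convexOn (hb : HasQuadraticBounds M h s) : ConvexOn ℝ Set.univ h := by
  refine ⟨convex_univ, fun x _ y _ a b ha hb' hab => ?_⟩
  set m := a • x + b • y
  have hx := (hb m x).1
  have hy := (hb m y).1
  have hslopes : a * ⟪s m, x - m⟫ + b * ⟪s m, y - m⟫ = 0 := by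
    rw [← real_inner_smul_right, ← real_inner_smul_right, ← inner_add_right]
    have : a • (x - m) + b • (y - m) = m - (a + b) • m := by simp only [m]; module
    rw [this, hab, one_smul, sub_self, inner_zero_right]
  have hm : a * h m + b * h m = h m := by rw [← add_mul, hab, one_mul]
  simp only [smul_eq_mul]
  nlinarith [mul_le_mul_of_nonneg_left hx ha, mul_le_mul_of_nonneg_left hy hb']

/-- Cocoercivity: compare the tangent plane at `z` with the parabola at `w`, at the point
`w - M⁻¹ • (s w - s z)` where the parabola's excess is smallest. -/
lemma add_inner_add_norm_sq_div_le (hM : 0 < M) (hb : HasQuadraticBounds M h s) (z w : E) :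
    h z + ⟪s z, w - z⟫ + ‖s w - s z‖ ^ 2 / (2 * M) ≤ h w := by
  set d := s w - s z
  set y := w - M⁻¹ • d
  have hlow := (hb z y).1
  have hup := (hb w y).2
  have hyz : y - z = (w - z) - M⁻¹ • d := by simp only [y]; abel
  have hyw : y - w = -(M⁻¹ • d) := by simp only [y]; abel
  rw [hyz, inner_sub_right, real_inner_smul_right] at hlow
  rw [hyw, inner_neg_right, real_inner_smul_right, norm_neg, norm_smul, Real.norm_eq_abs,
    abs_of_pos (inv_pos.2 hM)] at hup
  have hd : M⁻¹ * ⟪s w, d⟫ - M⁻¹ * ⟪s z, d⟫ = M⁻¹ * ‖d‖ ^ 2 := by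
    rw [← mul_sub, ← inner_sub_left, real_inner_self_eq_norm_sq]
  have e : M / 2 * (M⁻¹ * ‖d‖) ^ 2 = M⁻¹ * ‖d‖ ^ 2 - ‖d‖ ^ 2 / (2 * M) := by
    field_simp; ring
  linarith

lemma norm_sub_le (hM : 0 < M) (hb : HasQuadraticBounds M h s) (z w : E) :
    ‖s z - s w‖ ≤ M * ‖z - w‖ := by
  have hzw := hb.add_inner_add_norm_sq_div_le hM z w
  have hwz := hb.add_inner_add_norm_sq_div_le hM w z
  have hmono : ‖s z - s w‖ ^ 2 / M ≤ ⟪s z - s w, z - w⟫ := by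
    rw [norm_sub_rev (s w)] at hzw
    have e : ⟪s z - s w, z - w⟫ = -(⟪s z, w - z⟫ + ⟪s w, z - w⟫) := by
      rw [inner_sub_left, ← neg_sub w z, inner_neg_right]; ring
    have e' : ‖s z - s w‖ ^ 2 / M = ‖s z - s w‖ ^ 2 / (2 * M) + ‖s z - s w‖ ^ 2 / (2 * M) := by
      field_simp; ring
    linarith
  have hcs := real_inner_le_norm (s z - s w) (z - w)
  rcases (norm_nonneg (s z - s w)).eq_or_lt with h0 | hpos
  · rw [← h0]; positivity
  · rw [div_le_iff₀ hM] at hmono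
    nlinarith

lemma add_half_mul_norm_sq (hb : HasQuadraticBounds M h s) {μ : ℝ} (hμ : 0 ≤ μ) :
    HasQuadraticBounds (M + μ) (fun z => h z + μ / 2 * ‖z‖ ^ 2) (fun z => s z + μ • z) := by
  intro z w
  have hsq := norm_sq_eq_norm_sq_add_inner_add z w
  have hμsq : 0 ≤ μ * ‖w - z‖ ^ 2 := by positivity
  rw [inner_add_left, real_inner_smul_left]
  constructor <;> nlinarith [hb z w]

end HasQuadraticBounds

end QuadraticBounds

section Calculus

variable {E : Type*} [NormedAddCommGroup E] [InnerProductSpace ℝ E] [CompleteSpace E]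
  {f : E → ℝ} {s x y : E}

open AffineMap in
lemma HasGradientAt.hasDerivAt_comp_lineMap_s4 {t : ℝ} (hf : HasGradientAt f s (lineMap x y t)) :
    HasDerivAt (fun t => f (lineMap x y t)) ⟪s, y - x⟫ t := by
  have h := hf.hasFDerivAt.comp_hasDerivAt t hasDerivAt_lineMap
  rwa [InnerProductSpace.toDual_apply_apply] at h

open AffineMap in
lemma ConvexOn.add_inner_le_of_hasGradientAt_s4 (hconv : ConvexOn ℝ Set.univ f)
    (hf : HasGradientAt f s x) (y : E) : f x + ⟪s, y - x⟫ ≤ f y := by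
  have hline : ConvexOn ℝ Set.univ (fun t : ℝ => f (lineMap x y t)) :=
    hconv.comp_affineMap (lineMap x y)
  have hderiv : HasDerivAt (fun t => f (lineMap x y t)) ⟪s, y - x⟫ (0 : ℝ) :=
    HasGradientAt.hasDerivAt_comp_lineMap_s4 (by rwa [lineMap_apply_zero])
  have := hline.le_slope_of_hasDerivAt (Set.mem_univ 0) (Set.mem_univ 1) zero_lt_one hderiv
  rw [slope_def_field, lineMap_apply_zero, lineMap_apply_one] at this
  linarith [show f y - f x = (f y - f x) / (1 - 0) by norm_num]

lemma HasGradientAt.sub_half_mul_norm_sq (hf : HasGradientAt f s x) (μ : ℝ) :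
    HasGradientAt (fun z => f z - μ / 2 * ‖z‖ ^ 2) (s - μ • x) x := by
  rw [hasGradientAt_iff_hasFDerivAt, map_sub]
  refine hf.hasFDerivAt.sub
    (((hasStrictFDerivAt_norm_sq x).hasFDerivAt.const_mul (μ / 2)).congr_fderiv ?_)
  ext v
  simp [InnerProductSpace.toDual_apply_apply]
  ring

open AffineMap in
lemma le_add_inner_gradient_add_half_mul_norm_sq {L : ℝ} (hd : Differentiable ℝ f)
    (hlip : ∀ x y, ‖gradient f x - gradient f y‖ ≤ L * ‖x - y‖) (x y : E) :
    f y ≤ f x + ⟪gradient f x, y - x⟫ + L / 2 * ‖y - x‖ ^ 2 := by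
  set φ : ℝ → ℝ := fun t => f (lineMap x y t) - L / 2 * ‖y - x‖ ^ 2 * t ^ 2
  have hφ : ∀ t, HasDerivAt φ (⟪gradient f (lineMap x y t), y - x⟫ - L * ‖y - x‖ ^ 2 * t) t := by
    intro t
    refine (((hd (lineMap x y t)).hasGradientAt.hasDerivAt_comp_lineMap_s4).sub
      ((hasDerivAt_pow 2 t).const_mul (L / 2 * ‖y - x‖ ^ 2))).congr_deriv ?_
    push_cast; ring
  have hbound : ∀ t ∈ interior (Set.Icc (0 : ℝ) 1), deriv φ t ≤ ⟪gradient f x, y - x⟫ := by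
    intro t ht
    rw [interior_Icc] at ht
    rw [(hφ t).deriv]
    have hdist : lineMap x y t - x = t • (y - x) := by
      rw [lineMap_apply_module', add_sub_cancel_right]
    have hgrad := hlip (lineMap x y t) x
    rw [hdist, norm_smul, Real.norm_eq_abs, abs_of_pos ht.1] at hgrad
    have hcs := real_inner_le_norm (gradient f (lineMap x y t) - gradient f x) (y - x)
    rw [inner_sub_left] at hcs
    nlinarith [mul_le_mul_of_nonneg_right hgrad (norm_nonneg (y - x))]
  have := (convex_Icc (0 : ℝ) 1).image_sub_le_mul_sub_of_deriv_le
    (fun t _ => (hφ t).continuousAt.continuousWithinAt)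
    (fun t _ => (hφ t).differentiableAt.differentiableWithinAt) hbound
    0 (by simp) 1 (by simp) zero_le_one
  simp only [φ, lineMap_apply_zero, lineMap_apply_one] at this
  linarith

end Calculus

lemma nonneg_of_forall_mul_add_mul_sq_nonneg {a b : ℝ}
    (h : ∀ t : ℝ, 0 < t → t ≤ 1 → 0 ≤ b * t + a * t ^ 2) : 0 ≤ b := by
  have hlim : Filter.Tendsto (fun t => b + a * t) (nhds 0) (nhds b) :=
    (by fun_prop : Continuous fun t : ℝ => b + a * t).tendsto' 0 b (by simp)
  refine ge_of_tendsto (hlim.mono_left (nhdsWithin_le_nhds (s := Set.Ioi 0))) ?_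
  filter_upwards [Ioo_mem_nhdsGT one_pos] with t ht
  have := h t ht.1 ht.2.le
  exact (mul_nonneg_iff_of_pos_left ht.1).1 (by linarith)

section HullQuadratic

variable {E : Type*} [NormedAddCommGroup E] [InnerProductSpace ℝ E]
  {ι : Type*} [Fintype ι] (M : ℝ) (p : ι → E) (c : ι → ℝ)

local notation "P" => Fintype.linearCombination ℝ p
local notation "C" => Fintype.linearCombination ℝ c

/-- For `α` in the standard simplex, this is the `α`-average of the parabolas
`c i + M / 2 * ‖· - p i‖ ^ 2` evaluated at the points `p i + (z - P α)`, which average to `z`. -/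
noncomputable def hullQuadratic (α : ι → ℝ) (z : E) : ℝ :=
  C α + M / 2 * ‖z - P α‖ ^ 2

variable {M p c}

lemma hullQuadratic_single [DecidableEq ι] (i : ι) (z : E) :
    hullQuadratic M p c (Pi.single i 1) z = c i + M / 2 * ‖z - p i‖ ^ 2 := by
  simp [hullQuadratic, Fintype.linearCombination_apply_single]

lemma hullQuadratic_eq_add_inner_add (α : ι → ℝ) (z w : E) :
    hullQuadratic M p c α w
      = hullQuadratic M p c α z + ⟪M • (z - P α), w - z⟫ + M / 2 * ‖w - z‖ ^ 2 := by
  have h := norm_sq_eq_norm_sq_add_inner_add (z - P α) (w - P α)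
  rw [sub_sub_sub_cancel_right] at h
  simp only [hullQuadratic, h, real_inner_smul_left]
  ring

lemma hullQuadratic_add_smul_sub (α β : ι → ℝ) (t : ℝ) (z : E) :
    hullQuadratic M p c (α + t • (β - α)) z
      = hullQuadratic M p c α z + (C β - C α - M * ⟪z - P α, P β - P α⟫) * t
        + M / 2 * ‖P β - P α‖ ^ 2 * t ^ 2 := by
  have h : z - P (α + t • (β - α)) = (z - P α) - t • (P β - P α) := by
    simp only [map_add, map_smul, map_sub]; abel
  rw [hullQuadratic, hullQuadratic, h]
  simp only [norm_sub_sq_real, real_inner_smul_right, norm_smul, Real.norm_eq_abs, mul_pow,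
    sq_abs, map_add, map_smul, map_sub, smul_eq_mul]
  ring

lemma le_hullQuadratic {a : ℝ} {b q : E}
    (hq : ∀ i w, a + ⟪q, w - b⟫ ≤ c i + M / 2 * ‖w - p i‖ ^ 2)
    {α : ι → ℝ} (hα : α ∈ stdSimplex ℝ ι) (z : E) :
    a + ⟪q, z - b⟫ ≤ hullQuadratic M p c α z := by
  set u := z - P α
  have hsum : ∑ i, α i * (a + ⟪q, p i + u - b⟫) ≤ ∑ i, α i * (c i + M / 2 * ‖u‖ ^ 2) :=
    Finset.sum_le_sum fun i _ =>
      mul_le_mul_of_nonneg_left (by simpa using hq i (p i + u)) (hα.1 i)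
  have hlhs : ∑ i, α i * (a + ⟪q, p i + u - b⟫) = a + ⟪q, z - b⟫ := by
    have hz : z - b = ∑ i, α i • (p i + u - b) := by
      simp only [smul_sub, smul_add, Finset.sum_sub_distrib, Finset.sum_add_distrib,
        ← Finset.sum_smul, hα.2, one_smul, ← Fintype.linearCombination_apply, u]
      abel
    simp only [hz, inner_sum, real_inner_smul_right, mul_add, Finset.sum_add_distrib,
      ← Finset.sum_mul, hα.2, one_mul]
  have hrhs : ∑ i, α i * (c i + M / 2 * ‖u‖ ^ 2) = hullQuadratic M p c α z := by
    simp only [mul_add, Finset.sum_add_distrib, ← Finset.sum_mul, hα.2, one_mul, hullQuadratic,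
      Fintype.linearCombination_apply, smul_eq_mul, u]
  linarith

lemma add_inner_le_of_isMinOn [DecidableEq ι] (hM : 0 ≤ M) {α : ι → ℝ} {z : E}
    (hα : α ∈ stdSimplex ℝ ι)
    (hmin : IsMinOn (fun β => hullQuadratic M p c β z) (stdSimplex ℝ ι) α) (i : ι) (w : E) :
    hullQuadratic M p c α z + ⟪M • (z - P α), w - z⟫ ≤ c i + M / 2 * ‖w - p i‖ ^ 2 := by
  set u := z - P α
  set e : ι → ℝ := Pi.single i 1
  have hslope : 0 ≤ C e - C α - M * ⟪u, P e - P α⟫ := by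
    refine nonneg_of_forall_mul_add_mul_sq_nonneg (a := M / 2 * ‖P e - P α‖ ^ 2) fun t ht0 ht1 => ?_
    have hmem : α + t • (e - α) ∈ stdSimplex ℝ ι := by
      convert (convex_stdSimplex ℝ ι) hα (single_mem_stdSimplex ℝ i) (sub_nonneg.2 ht1) ht0.le
        (sub_add_cancel 1 t) using 1
      module
    have := isMinOn_iff.1 hmin _ hmem
    rw [hullQuadratic_add_smul_sub] at this
    linarith
  have hPe : P e = p i := by simp [e, Fintype.linearCombination_apply_single]
  have hCe : C e = c i := by simp [e, Fintype.linearCombination_apply_single]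
  rw [hPe, hCe] at hslope
  have hsplit : ⟪u, w - z⟫ = ⟪u, w - p i⟫ + ⟪u, p i - P α⟫ - ‖u‖ ^ 2 := by
    rw [← real_inner_self_eq_norm_sq, ← inner_add_right, ← inner_sub_right]
    congr 1; simp only [u]; abel
  -- The parabola minus the tangent plane is the quantity in `hslope` plus this square.
  have hsq : 0 ≤ ‖w - p i - u‖ ^ 2 := sq_nonneg _
  rw [norm_sub_sq_real, real_inner_comm] at hsq
  simp only [hullQuadratic, real_inner_smul_left, hsplit]
  nlinarith [mul_nonneg hM hsq]

/-- `h z` is the minimum of `hullQuadratic M p c · z` over the simplex (the Moreau envelope of the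
convex hull of the points `(p i, c i)`), with slope `M • (z - P α)` at a minimiser `α`. Minimality
makes the tangent plane there an affine minorant of the parabolas, whence the lower bound. -/
theorem exists_hasQuadraticBounds_between [Nonempty ι] (hM : 0 ≤ M) :
    ∃ h s, HasQuadraticBounds M h s ∧ (∀ i w, h w ≤ c i + M / 2 * ‖w - p i‖ ^ 2) ∧
      ∀ (a : ℝ) (b q : E), (∀ i w, a + ⟪q, w - b⟫ ≤ c i + M / 2 * ‖w - p i‖ ^ 2) →
        ∀ w, a + ⟪q, w - b⟫ ≤ h w := by
  classical
  have hcont : ∀ z, Continuous fun α => hullQuadratic M p c α z := fun z =>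
    (C).continuous_of_finiteDimensional.add
      (continuous_const.mul ((continuous_const.sub (P).continuous_of_finiteDimensional).norm.pow 2))
  have hmin : ∀ z, ∃ α ∈ stdSimplex ℝ ι,
      IsMinOn (fun β => hullQuadratic M p c β z) (stdSimplex ℝ ι) α := fun z =>
    (isCompact_stdSimplex ℝ ι).exists_isMinOn
      ⟨_, single_mem_stdSimplex ℝ (Classical.arbitrary ι)⟩ (hcont z).continuousOn
  choose α hαΔ hαmin using hmin
  refine ⟨fun z => hullQuadratic M p c (α z) z, fun z => M • (z - P (α z)),
    fun z w => ⟨?_, ?_⟩, fun i w => ?_, fun a b q hq w => le_hullQuadratic hq (hαΔ w) w⟩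
  · exact le_hullQuadratic (add_inner_le_of_isMinOn hM (hαΔ z) (hαmin z)) (hαΔ w) w
  · rw [← hullQuadratic_eq_add_inner_add]
    exact hαmin w (hαΔ z)
  · rw [← hullQuadratic_single]
    exact hαmin w (single_mem_stdSimplex ℝ i)

end HullQuadratic

section Interpolation

variable {E : Type*} [NormedAddCommGroup E] [InnerProductSpace ℝ E]

lemma sub_add_half_mul_norm_sq_eq {M : ℝ} (hM : M ≠ 0) (a : ℝ) (x g w : E) :
    a - ‖g‖ ^ 2 / (2 * M) + M / 2 * ‖w - (x - M⁻¹ • g)‖ ^ 2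
      = a + ⟪g, w - x⟫ + M / 2 * ‖w - x‖ ^ 2 := by
  rw [show w - (x - M⁻¹ • g) = (w - x) + M⁻¹ • g by abel, norm_add_sq_real, norm_smul,
    real_inner_smul_right, real_inner_comm, Real.norm_eq_abs, mul_pow, sq_abs]
  field_simp
  ring

theorem exists_hasQuadraticBounds_interpolating [CompleteSpace E] {ι : Type*} [Fintype ι]
    {M : ℝ} (hM : 0 < M) (x g : ι → E) (f : ι → ℝ)
    (hpair : ∀ i j, f j + ⟪g j, x i - x j⟫ + ‖g i - g j‖ ^ 2 / (2 * M) ≤ f i) :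
    ∃ h s, HasQuadraticBounds M h s ∧ ∀ i, h (x i) = f i ∧ s (x i) = g i := by
  rcases isEmpty_or_nonempty ι with hι | hι
  · exact ⟨0, 0, fun z w => by simp; positivity, isEmptyElim⟩
  -- `x i - M⁻¹ • g i` and `f i - ‖g i‖ ^ 2 / (2 * M)` are the vertex and the minimum of the
  -- parabola `f i + ⟪g i, · - x i⟫ + M / 2 * ‖· - x i‖ ^ 2`.
  obtain ⟨h, s, hb, hle, hge⟩ := exists_hasQuadraticBounds_between
    (p := fun i => x i - M⁻¹ • g i) (c := fun i => f i - ‖g i‖ ^ 2 / (2 * M)) hM.le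
  simp only [sub_add_half_mul_norm_sq_eq hM.ne'] at hle hge
  have htangent : ∀ i w, f i + ⟪g i, w - x i⟫ ≤ h w := fun i =>
    hge _ _ _ fun j => add_inner_le_add_inner_add_half_mul_norm_sq hM (hpair j i)
  have hval : ∀ i, h (x i) = f i := fun i =>
    le_antisymm (by simpa using hle i (x i)) (by simpa using htangent i (x i))
  refine ⟨h, s, hb, fun i => ⟨hval i, (hb.hasGradientAt (x i)).unique ?_⟩⟩
  exact hasGradientAt_of_le_of_le (fun w => hval i ▸ htangent i w) (fun w => hval i ▸ hle i w)

end Interpolation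

lemma SmoothStronglyConvex.hasQuadraticBounds_sub {d : ℕ} {μ L : ℝ}
    {f : EuclideanSpace ℝ (Fin d) → ℝ} (hf : SmoothStronglyConvex μ L f) :
    HasQuadraticBounds (L - μ) (fun z => f z - μ / 2 * ‖z‖ ^ 2)
      (fun z => gradient f z - μ • z) := by
  obtain ⟨hd, hlip, hconv⟩ := hf
  refine fun z w => ⟨hconv.add_inner_le_of_hasGradientAt_s4
    ((hd z).hasGradientAt.sub_half_mul_norm_sq μ) w, ?_⟩
  have hdescent := le_add_inner_gradient_add_half_mul_norm_sq hd hlip z w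
  beta_reduce
  rw [inner_sub_left, real_inner_smul_left, norm_sq_eq_norm_sq_add_inner_add z w]
  linarith

lemma HasQuadraticBounds.smoothStronglyConvex {d : ℕ} {μ L : ℝ}
    {f : EuclideanSpace ℝ (Fin d) → ℝ} {s : EuclideanSpace ℝ (Fin d) → EuclideanSpace ℝ (Fin d)}
    (hL : 0 < L) (hb : HasQuadraticBounds L f s)
    (hconv : ConvexOn ℝ Set.univ fun z => f z - μ / 2 * ‖z‖ ^ 2) :
    SmoothStronglyConvex μ L f := by
  refine ⟨fun z => (hb.hasGradientAt z).differentiableAt, fun z w => ?_, hconv⟩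
  rw [(hb.hasGradientAt z).gradient, (hb.hasGradientAt w).gradient]
  exact hb.norm_sub_le hL z w

lemma interpolation_inequality_iff {E : Type*} [NormedAddCommGroup E] [InnerProductSpace ℝ E]
    {μ L : ℝ} (hL : L ≠ 0) (hμL : μ ≠ L) (xi xj gi gj : E) (fi fj : ℝ) :
    fi - fj - ⟪gj, xi - xj⟫ ≥ 1 / (2 * (1 - μ / L)) *
        (1 / L * ‖gi - gj‖ ^ 2 + μ * ‖xi - xj‖ ^ 2 - 2 * (μ / L) * ⟪gj - gi, xj - xi⟫) ↔
      (fj - μ / 2 * ‖xj‖ ^ 2) + ⟪gj - μ • xj, xi - xj⟫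
        + ‖(gi - μ • xi) - (gj - μ • xj)‖ ^ 2 / (2 * (L - μ)) ≤ fi - μ / 2 * ‖xi‖ ^ 2 := by
  have hLμ : L - μ ≠ 0 := sub_ne_zero.2 hμL.symm
  have hdiff : (gi - μ • xi) - (gj - μ • xj) = (gi - gj) - μ • (xi - xj) := by module
  have hcoef : 1 / (2 * (1 - μ / L)) *
        (1 / L * ‖gi - gj‖ ^ 2 + μ * ‖xi - xj‖ ^ 2 - 2 * (μ / L) * ⟪gi - gj, xi - xj⟫)
      = (‖gi - gj‖ ^ 2 - 2 * (μ * ⟪gi - gj, xi - xj⟫) + μ ^ 2 * ‖xi - xj‖ ^ 2) / (2 * (L - μ))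
        + μ / 2 * ‖xi - xj‖ ^ 2 := by
    rw [show 1 - μ / L = (L - μ) / L by field_simp]
    field_simp
    ring
  have hswap : ⟪gj - gi, xj - xi⟫ = ⟪gi - gj, xi - xj⟫ := by
    rw [← neg_sub gi gj, ← neg_sub xi xj, inner_neg_neg]
  rw [hswap, hcoef, hdiff, norm_sub_sq_real (gi - gj), real_inner_smul_right,
    norm_smul, Real.norm_eq_abs, mul_pow, sq_abs, inner_sub_left gj, real_inner_smul_left,
    norm_sq_eq_norm_sq_add_inner_add xj xi]
  constructor <;> intro h <;> linarith

/-- Theorem 4 of the paper (`F_{μ,L}`-interpolability, finite `L`):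
`{(x_i, g_i, f_i)}` is `F_{μ,L}`-interpolable iff the interpolation inequalities
hold for every pair of indices. -/
theorem interpolable_iff {d : ℕ} {ι : Type*} [Fintype ι]
    (μ L : ℝ) (hμ : 0 ≤ μ) (hμL : μ < L)
    (x g : ι → EuclideanSpace ℝ (Fin d)) (fv : ι → ℝ) :
    Interpolable μ L x g fv ↔
      ∀ i j, fv i - fv j - ⟪g j, x i - x j⟫ ≥
        1 / (2 * (1 - μ / L)) *
          (1 / L * ‖g i - g j‖ ^ 2 + μ * ‖x i - x j‖ ^ 2
            - 2 * (μ / L) * ⟪g j - g i, x j - x i⟫) := by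
  have hL : 0 < L := hμ.trans_lt hμL
  have hLμ : 0 < L - μ := sub_pos.2 hμL
  simp only [interpolation_inequality_iff hL.ne' hμL.ne]
  constructor
  · rintro ⟨f, hf, hdata⟩ i j
    have := hf.hasQuadraticBounds_sub.add_inner_add_norm_sq_div_le hLμ (x j) (x i)
    simpa only [(hdata i).1, (hdata j).1, (hdata i).2, (hdata j).2] using this
  · intro hpair
    obtain ⟨h, s, hb, hdata⟩ := exists_hasQuadraticBounds_interpolating hLμ x
      (fun i => g i - μ • x i) (fun i => fv i - μ / 2 * ‖x i‖ ^ 2) hpair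
    have hF := hb.add_half_mul_norm_sq hμ
    rw [sub_add_cancel] at hF
    refine ⟨_, hF.smoothStronglyConvex hL (by simpa using hb.convexOn), fun i => ⟨?_, ?_⟩⟩
    · simp [(hdata i).1]
    · rw [(hF.hasGradientAt (x i)).gradient, (hdata i).2, sub_add_cancel]
end

section
/- Let 0 < L < ∞, let I be a finite index set, and let (x_i, g_i, f_i) for i ∈ I be triples with x_i, g_i ∈ ℝ^d and f_i ∈ ℝ. Then there exists a convex differentiable function f : ℝ^d → ℝ whose gradient is L-Lipschitz and which satisfies f(x_i) = f_i and ∇f(x_i) = g_i for all i ∈ I, if and only if f_i ≥ f_j + ⟨g_j, x_i − x_j⟩ + (1/(2L))‖g_i − g_j‖² holds for all i, j ∈ I. -/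
open scoped RealInnerProductSpace Topology
open Filter Set

/-!
Necessity: subtracting the linear form `⟪g j, ·⟫` from `f` leaves a convex `L`-smooth function
minimized at `x j`, and one gradient step from `x i` (the descent lemma) lowers it by at least
`‖g i - g j‖² / (2L)`.

Sufficiency: the data `(g i, x i, ⟪g i, x i⟫ - fv i)` is interpolated by the maximum `h` of the
quadratics `⟪·, x i⟫ - fv i + ‖· - g i‖² / (2L)`, a `1 / L`-strongly convex function (the
interpolation inequalities say exactly that the `i`-th piece is the maximal one at `g i`). Its
convex conjugate `f z = max_y (⟪z, y⟫ - h y)` is convex, its maximizer `Y z` is unique and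
`L`-Lipschitz in `z` by strong convexity, and the two-sided subgradient inequality then makes `f`
differentiable with `∇f = Y`. Finally `Y (x i) = g i`, so `f (x i) = ⟪x i, g i⟫ - h (g i) = fv i`.
-/

section FirstOrder

variable {E : Type*} [NormedAddCommGroup E] [InnerProductSpace ℝ E] [CompleteSpace E]
  {f : E → ℝ} {L : ℝ}

lemma HasGradientAt.hasDerivAt_comp_add_smul {f' x v : E} {t : ℝ}
    (hf : HasGradientAt f f' (x + t • v)) :
    HasDerivAt (fun s : ℝ => f (x + s • v)) ⟪f', v⟫ t := by
  have hline : HasDerivAt (fun s : ℝ => x + s • v) v t := by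
    simpa using ((hasDerivAt_id t).smul_const v).const_add x
  exact (hasGradientAt_iff_hasFDerivAt.1 hf).comp_hasDerivAt t hline

lemma ConvexOn.add_inner_gradient_le (hc : ConvexOn ℝ univ f) {x : E}
    (hf : DifferentiableAt ℝ f x) (y : E) : f x + ⟪gradient f x, y - x⟫ ≤ f y := by
  have hline : ConvexOn ℝ univ fun t : ℝ => f (x + t • (y - x)) := by
    simpa [Function.comp_def, AffineMap.lineMap_apply_module', add_comm]
      using hc.comp_affineMap (AffineMap.lineMap x y)
  have hderiv : HasDerivAt (fun t : ℝ => f (x + t • (y - x))) ⟪gradient f x, y - x⟫ 0 :=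
    HasGradientAt.hasDerivAt_comp_add_smul (by simpa using hf.hasGradientAt)
  have := hline.le_slope_of_hasDerivAt (mem_univ 0) (mem_univ 1) one_pos hderiv
  simp only [slope_def_field, zero_smul, one_smul, add_zero, sub_zero, div_one,
    add_sub_cancel] at this
  linarith

lemma le_add_inner_gradient_add_sq (hf : Differentiable ℝ f)
    (hlip : ∀ u v, ‖gradient f u - gradient f v‖ ≤ L * ‖u - v‖) (x y : E) :
    f y ≤ f x + ⟪gradient f x, y - x⟫ + L / 2 * ‖y - x‖ ^ 2 := by
  set v := y - x
  have hφ : ∀ t, HasDerivAt (fun s : ℝ => f (x + s • v) - s * ⟪gradient f x, v⟫)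
      (⟪gradient f (x + t • v), v⟫ - ⟪gradient f x, v⟫) t := fun t =>
    (hf _).hasGradientAt.hasDerivAt_comp_add_smul.sub (hasDerivAt_mul_const _)
  have hB : ∀ t, HasDerivAt (fun s : ℝ => f x + L / 2 * s ^ 2 * ‖v‖ ^ 2) (L * t * ‖v‖ ^ 2) t :=
    fun t => ((((hasDerivAt_pow 2 t).const_mul (L / 2)).mul_const (‖v‖ ^ 2)).const_add
      (f x)).congr_deriv (by ring)
  have hbound : ∀ t ∈ Ico (0 : ℝ) 1,
      ⟪gradient f (x + t • v), v⟫ - ⟪gradient f x, v⟫ ≤ L * t * ‖v‖ ^ 2 := by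
    rintro t ⟨ht, -⟩
    rw [← inner_sub_left]
    calc _ ≤ ‖gradient f (x + t • v) - gradient f x‖ * ‖v‖ := real_inner_le_norm _ _
      _ ≤ L * ‖t • v‖ * ‖v‖ := by gcongr; simpa using hlip (x + t • v) x
      _ = L * t * ‖v‖ ^ 2 := by rw [norm_smul, Real.norm_of_nonneg ht]; ring
  have := image_le_of_deriv_right_le_deriv_boundary
    (fun t _ => (hφ t).continuousAt.continuousWithinAt) (fun t _ => (hφ t).hasDerivWithinAt)
    (by simp) (fun t _ => (hB t).continuousAt.continuousWithinAt)
    (fun t _ => (hB t).hasDerivWithinAt) hbound (right_mem_Icc.2 zero_le_one)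
  simp only [one_smul, one_mul, one_pow, v, add_sub_cancel] at this
  linarith

lemma le_sub_sq_norm_gradient_of_forall_le (hL : 0 < L) (hf : Differentiable ℝ f)
    (hlip : ∀ u v, ‖gradient f u - gradient f v‖ ≤ L * ‖u - v‖) {z₀ : E}
    (hmin : ∀ z, f z₀ ≤ f z) (x : E) :
    f z₀ ≤ f x - 1 / (2 * L) * ‖gradient f x‖ ^ 2 := by
  have hstep := le_add_inner_gradient_add_sq hf hlip x (x - L⁻¹ • gradient f x)
  rw [sub_sub_cancel_left, inner_neg_right, real_inner_smul_right, real_inner_self_eq_norm_sq,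
    norm_neg, norm_smul, Real.norm_of_nonneg (inv_nonneg.2 hL.le)] at hstep
  have hL' : L ≠ 0 := hL.ne'
  calc f z₀ ≤ f (x - L⁻¹ • gradient f x) := hmin _
    _ ≤ _ := hstep
    _ = f x - 1 / (2 * L) * ‖gradient f x‖ ^ 2 := by field_simp; ring

lemma HasGradientAt.sub_inner {f' z : E} (hf : HasGradientAt f f' z) (a : E) :
    HasGradientAt (fun w => f w - ⟪a, w⟫) (f' - a) z := by
  rw [hasGradientAt_iff_hasFDerivAt, map_sub]
  exact (hasGradientAt_iff_hasFDerivAt.1 hf).sub (InnerProductSpace.toDual ℝ E a).hasFDerivAt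

lemma ConvexOn.add_inner_gradient_add_sq_le (hL : 0 < L) (hc : ConvexOn ℝ univ f)
    (hf : Differentiable ℝ f) (hlip : ∀ u v, ‖gradient f u - gradient f v‖ ≤ L * ‖u - v‖)
    (x y : E) :
    f y + ⟪gradient f y, x - y⟫ + 1 / (2 * L) * ‖gradient f x - gradient f y‖ ^ 2 ≤ f x := by
  set φ : E → ℝ := fun w => f w - ⟪gradient f y, w⟫
  have hφ : ∀ z, HasGradientAt φ (gradient f z - gradient f y) z :=
    fun z => (hf z).hasGradientAt.sub_inner _
  have hφc : ConvexOn ℝ univ φ := hc.sub ((innerₛₗ ℝ (gradient f y)).concaveOn convex_univ)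
  have hφmin : ∀ z, φ y ≤ φ z := fun z => by
    simpa [(hφ y).gradient] using hφc.add_inner_gradient_le (hφ y).differentiableAt z
  have hφlip : ∀ u v, ‖gradient φ u - gradient φ v‖ ≤ L * ‖u - v‖ := fun u v => by
    simpa [(hφ u).gradient, (hφ v).gradient] using hlip u v
  have key := le_sub_sq_norm_gradient_of_forall_le hL (fun z => (hφ z).differentiableAt)
    hφlip hφmin x
  rw [(hφ x).gradient] at key
  simp only [φ, inner_sub_right] at key ⊢
  linarith

end FirstOrder

lemma UniformConvexOn.finset_sup' {E ι : Type*} [NormedAddCommGroup E] [NormedSpace ℝ E]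
    {t : Set E} {φ : ℝ → ℝ} {s : Finset ι} (hs : s.Nonempty) {F : ι → E → ℝ}
    (hF : ∀ i ∈ s, UniformConvexOn t φ (F i)) :
    UniformConvexOn t φ fun y => s.sup' hs fun i => F i y := by
  refine ⟨(hF _ hs.choose_spec).1, fun u hu v hv a b ha hb hab => ?_⟩
  obtain ⟨k, hk, hmax⟩ := Finset.exists_mem_eq_sup' hs fun i => F i (a • u + b • v)
  dsimp only
  rw [hmax]
  refine ((hF k hk).2 hu hv ha hb hab).trans ?_
  simp only [smul_eq_mul]
  gcongr
  · exact Finset.le_sup' (fun i => F i u) hk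
  · exact Finset.le_sup' (fun i => F i v) hk

section InnerProductSpace

variable {E : Type*} [NormedAddCommGroup E] [InnerProductSpace ℝ E]

lemma StrongConvexOn.sub_inner {s : Set E} {m : ℝ} {h : E → ℝ} (hh : StrongConvexOn s m h)
    (z : E) : StrongConvexOn s m fun y => h y - ⟪z, y⟫ := by
  rw [strongConvexOn_iff_convex] at hh ⊢
  have hsplit : (fun y => h y - ⟪z, y⟫ - m / 2 * ‖y‖ ^ 2)
      = (fun y => h y - m / 2 * ‖y‖ ^ 2) - ⇑(innerₛₗ ℝ z) := by
    ext y
    simp only [Pi.sub_apply, innerₛₗ_apply_apply]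
    ring
  rw [hsplit]
  exact hh.sub ((innerₛₗ ℝ z).concaveOn hh.1)

lemma StrongConvexOn.add_sq_le_of_forall_le {m : ℝ} {h : E → ℝ}
    (hh : StrongConvexOn univ m h) {y₀ : E} (hmin : ∀ y, h y₀ ≤ h y) (y : E) :
    h y₀ + m / 2 * ‖y - y₀‖ ^ 2 ≤ h y := by
  have key : ∀ a ∈ Ioo (0 : ℝ) 1, (1 - a) * (m / 2 * ‖y - y₀‖ ^ 2) ≤ h y - h y₀ := by
    rintro a ⟨ha₀, ha₁⟩
    have hcomb := hh.2 (mem_univ y) (mem_univ y₀) ha₀.le (sub_nonneg.2 ha₁.le) (by ring)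
    have := (hmin _).trans hcomb
    simp only [smul_eq_mul] at this
    nlinarith
  have hlim : Tendsto (fun a : ℝ => (1 - a) * (m / 2 * ‖y - y₀‖ ^ 2)) (𝓝[>] 0)
      (𝓝 ((1 - 0) * (m / 2 * ‖y - y₀‖ ^ 2))) :=
    ((continuous_const.sub continuous_id).mul continuous_const).continuousWithinAt
  have := le_of_tendsto hlim (eventually_of_mem (Ioo_mem_nhdsGT one_pos) key)
  linarith

lemma Continuous.exists_forall_le_of_sq_le [ProperSpace E] {φ : E → ℝ} (hφ : Continuous φ)
    {m : ℝ} (hm : 0 < m) (a : E) (c : ℝ) (hlow : ∀ y, m * ‖y‖ ^ 2 + ⟪a, y⟫ + c ≤ φ y) :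
    ∃ y₀, ∀ y, φ y₀ ≤ φ y := by
  have hr : Tendsto (fun r : ℝ => r * (m * r - ‖a‖) + c) atTop atTop :=
    tendsto_atTop_add_const_right _ c
      (tendsto_id.atTop_mul_atTop₀ (tendsto_atTop_add_const_right _ _
        (tendsto_id.const_mul_atTop hm)))
  refine hφ.exists_forall_le
    (tendsto_atTop_mono (fun y => ?_) (hr.comp tendsto_norm_cocompact_atTop))
  have := neg_abs_le ⟪a, y⟫
  have := abs_real_inner_le_norm a y
  simp only [Function.comp_apply]
  nlinarith [hlow y, norm_nonneg y]

lemma mul_norm_sub_le_of_add_sq_le {h : E → ℝ} {m : ℝ} {u v y₀ y₁ : E}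
    (h₀ : ∀ y, h y₀ - ⟪u, y₀⟫ + m / 2 * ‖y - y₀‖ ^ 2 ≤ h y - ⟪u, y⟫)
    (h₁ : ∀ y, h y₁ - ⟪v, y₁⟫ + m / 2 * ‖y - y₁‖ ^ 2 ≤ h y - ⟪v, y⟫) :
    m * ‖y₀ - y₁‖ ≤ ‖u - v‖ := by
  have hsum : m * ‖y₀ - y₁‖ ^ 2 ≤ ‖u - v‖ * ‖y₀ - y₁‖ := by
    have h01 := h₀ y₁
    have h10 := h₁ y₀
    have hcs := real_inner_le_norm (u - v) (y₀ - y₁)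
    rw [norm_sub_rev y₁ y₀] at h01
    simp only [inner_sub_left, inner_sub_right] at hcs
    nlinarith
  rcases (norm_nonneg (y₀ - y₁)).eq_or_lt with hz | hz
  · rw [← hz, mul_zero]
    exact norm_nonneg _
  · nlinarith

lemma convexOn_univ_of_forall_add_inner_le {f : E → ℝ} {Y : E → E}
    (hsub : ∀ x u, f x + ⟪Y x, u - x⟫ ≤ f u) : ConvexOn ℝ univ f := by
  refine ⟨convex_univ, fun u _ v _ a b ha hb hab => ?_⟩
  set w := a • u + b • v
  have hu := hsub w u
  have hv := hsub w v
  have hw : a * ⟪Y w, u - w⟫ + b * ⟪Y w, v - w⟫ = 0 := by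
    rw [← real_inner_smul_right, ← real_inner_smul_right, ← inner_add_right, smul_sub, smul_sub,
      ← add_sub_add_comm, ← add_smul, hab, one_smul, sub_eq_zero.2 rfl, inner_zero_right]
  have hfw : f w = a * f w + b * f w := by rw [← add_mul, hab, one_mul]
  simp only [smul_eq_mul]
  linarith [mul_le_mul_of_nonneg_left hu ha, mul_le_mul_of_nonneg_left hv hb]

lemma hasGradientAt_of_forall_add_inner_le [CompleteSpace E] {f : E → ℝ} {Y : E → E}
    (hsub : ∀ x u, f x + ⟪Y x, u - x⟫ ≤ f u) {x : E} (hY : ContinuousAt Y x) :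
    HasGradientAt f (Y x) x := by
  rw [hasGradientAt_iff_isLittleO, Asymptotics.isLittleO_iff]
  intro ε hε
  have hnear : ∀ᶠ u in 𝓝 x, ‖Y u - Y x‖ ≤ ε :=
    (Metric.tendsto_nhds.1 hY ε hε).mono fun u hu => by rw [dist_eq_norm] at hu; exact hu.le
  filter_upwards [hnear] with u hu
  have hlow := hsub x u
  have hup := hsub u x
  have hcs := real_inner_le_norm (Y u - Y x) (u - x)
  rw [inner_sub_left] at hcs
  rw [← neg_sub u x, inner_neg_right] at hup
  rw [Real.norm_eq_abs, abs_of_nonneg (by linarith)]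
  nlinarith [norm_nonneg (u - x)]

lemma add_inner_le_of_forall_le {h : E → ℝ} {Y : E → E}
    (hY : ∀ z y, h (Y z) - ⟪z, Y z⟫ ≤ h y - ⟪z, y⟫) (x u : E) :
    ⟪x, Y x⟫ - h (Y x) + ⟪Y x, u - x⟫ ≤ ⟪u, Y u⟫ - h (Y u) := by
  have := hY u (Y x)
  rw [inner_sub_right, real_inner_comm u (Y x), real_inner_comm x (Y x)]
  linarith

end InnerProductSpace

section Interpolation

variable {E ι : Type*} [NormedAddCommGroup E] [InnerProductSpace ℝ E] [Fintype ι] [Nonempty ι]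

/-- The `1 / L`-strongly convex interpolant of the conjugate data
`(g i, x i, ⟪g i, x i⟫ - fv i)`. -/
noncomputable def conjugateInterpolant (L : ℝ) (x g : ι → E) (fv : ι → ℝ) (y : E) : ℝ :=
  Finset.univ.sup' Finset.univ_nonempty fun i => ⟪y, x i⟫ - fv i + 1 / (2 * L) * ‖y - g i‖ ^ 2

variable {L : ℝ} {x g : ι → E} {fv : ι → ℝ}

lemma le_conjugateInterpolant (L : ℝ) (x g : ι → E) (fv : ι → ℝ) (i : ι) (y : E) :
    ⟪y, x i⟫ - fv i + 1 / (2 * L) * ‖y - g i‖ ^ 2 ≤ conjugateInterpolant L x g fv y :=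
  Finset.le_sup' (fun i => ⟪y, x i⟫ - fv i + 1 / (2 * L) * ‖y - g i‖ ^ 2) (Finset.mem_univ i)

lemma conjugateInterpolant_apply_eq
    (hint : ∀ i j, fv j + ⟪g j, x i - x j⟫ + 1 / (2 * L) * ‖g i - g j‖ ^ 2 ≤ fv i) (i : ι) :
    conjugateInterpolant L x g fv (g i) = ⟪g i, x i⟫ - fv i := by
  refine le_antisymm (Finset.sup'_le _ _ fun j _ => ?_) ?_
  · have := hint j i
    rw [norm_sub_rev, inner_sub_right] at this
    linarith
  · simpa using le_conjugateInterpolant L x g fv i (g i)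

lemma continuous_conjugateInterpolant : Continuous (conjugateInterpolant L x g fv) :=
  continuous_iff_continuousAt.2 fun _ => ContinuousAt.finset_sup'_apply _ fun _ _ =>
    by fun_prop

lemma strongConvexOn_conjugateInterpolant :
    StrongConvexOn univ (1 / L) (conjugateInterpolant L x g fv) := by
  refine UniformConvexOn.finset_sup' _ fun i _ => strongConvexOn_iff_convex.2 ?_
  have hexpand : (fun y => ⟪y, x i⟫ - fv i + 1 / (2 * L) * ‖y - g i‖ ^ 2 - 1 / L / 2 * ‖y‖ ^ 2)
      = ⇑(innerₛₗ ℝ (x i - (1 / L) • g i)) + fun _ => 1 / (2 * L) * ‖g i‖ ^ 2 - fv i := by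
    ext y
    simp only [Pi.add_apply, innerₛₗ_apply_apply, norm_sub_sq_real, inner_sub_right,
      real_inner_smul_right, real_inner_comm y]
    ring
  rw [hexpand]
  exact ((innerₛₗ ℝ _).convexOn convex_univ).add_const _

lemma exists_forall_conjugateInterpolant_sub_inner_le [FiniteDimensional ℝ E] (hL : 0 < L)
    (z : E) : ∃ y₀, ∀ y, conjugateInterpolant L x g fv y₀ - ⟪z, y₀⟫
      ≤ conjugateInterpolant L x g fv y - ⟪z, y⟫ := by
  obtain ⟨i⟩ := ‹Nonempty ι›
  refine (continuous_conjugateInterpolant.sub (continuous_const.inner continuous_id))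
    |>.exists_forall_le_of_sq_le (by positivity : 0 < 1 / (2 * L))
      (x i - (1 / L) • g i - z) (1 / (2 * L) * ‖g i‖ ^ 2 - fv i) fun y => ?_
  have hexpand : ⟪y, x i⟫ - fv i + 1 / (2 * L) * ‖y - g i‖ ^ 2 - ⟪z, y⟫
      = 1 / (2 * L) * ‖y‖ ^ 2 + ⟪x i - (1 / L) • g i - z, y⟫
        + (1 / (2 * L) * ‖g i‖ ^ 2 - fv i) := by
    simp only [norm_sub_sq_real, real_inner_comm y, inner_sub_right, real_inner_smul_right]
    ring
  have := le_conjugateInterpolant L x g fv i y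
  simp only [Pi.sub_apply, id]
  linarith

lemma eq_of_forall_conjugateInterpolant_sub_inner_le (hL : 0 < L)
    (hint : ∀ i j, fv j + ⟪g j, x i - x j⟫ + 1 / (2 * L) * ‖g i - g j‖ ^ 2 ≤ fv i) {i : ι} {y₀ : E}
    (hmin : ∀ y, conjugateInterpolant L x g fv y₀ - ⟪x i, y₀⟫
      ≤ conjugateInterpolant L x g fv y - ⟪x i, y⟫) : y₀ = g i := by
  have hlow := le_conjugateInterpolant L x g fv i y₀
  have hgi := hmin (g i)
  rw [conjugateInterpolant_apply_eq hint, real_inner_comm (x i)] at hgi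
  rw [real_inner_comm (x i)] at hlow
  have : ‖y₀ - g i‖ ^ 2 ≤ 0 := by
    have : 1 / (2 * L) * ‖y₀ - g i‖ ^ 2 ≤ 0 := by linarith
    exact nonpos_of_mul_nonpos_right this (by positivity)
  rw [← sub_eq_zero, ← norm_eq_zero]
  exact pow_eq_zero_iff two_ne_zero |>.1 (le_antisymm this (sq_nonneg _))

end Interpolation

theorem exists_smooth_convex_interpolant {E ι : Type*} [NormedAddCommGroup E]
    [InnerProductSpace ℝ E] [FiniteDimensional ℝ E] [Fintype ι] {L : ℝ} (hL : 0 < L)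
    (x g : ι → E) (fv : ι → ℝ)
    (hint : ∀ i j, fv j + ⟪g j, x i - x j⟫ + 1 / (2 * L) * ‖g i - g j‖ ^ 2 ≤ fv i) :
    ∃ f : E → ℝ, ConvexOn ℝ univ f ∧ Differentiable ℝ f ∧
      (∀ u v, ‖gradient f u - gradient f v‖ ≤ L * ‖u - v‖) ∧
      (∀ i, f (x i) = fv i) ∧ (∀ i, gradient f (x i) = g i) := by
  cases isEmpty_or_nonempty ι
  · refine ⟨fun _ => 0, convexOn_const 0 convex_univ, differentiable_const 0, fun u v => ?_,
      isEmptyElim, isEmptyElim⟩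
    simpa [gradient_fun_const] using mul_nonneg hL.le (norm_nonneg (u - v))
  set h := conjugateInterpolant L x g fv
  choose Y hY using exists_forall_conjugateInterpolant_sub_inner_le (x := x) (g := g) (fv := fv) hL
  have hstrong : ∀ z y, h (Y z) - ⟪z, Y z⟫ + 1 / L / 2 * ‖y - Y z‖ ^ 2 ≤ h y - ⟪z, y⟫ :=
    fun z => (strongConvexOn_conjugateInterpolant.sub_inner z).add_sq_le_of_forall_le (hY z)
  have hYlip : ∀ u v, ‖Y u - Y v‖ ≤ L * ‖u - v‖ := fun u v => by
    have := mul_norm_sub_le_of_add_sq_le (hstrong u) (hstrong v)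
    rwa [one_div, inv_mul_le_iff₀ hL] at this
  have hYcont : Continuous Y := (LipschitzWith.of_dist_le_mul (K := ⟨L, hL.le⟩)
    fun u v => by rw [dist_eq_norm, dist_eq_norm]; exact hYlip u v).continuous
  -- the conjugate of `h`, whose defining supremum is attained at `Y z`
  set f := fun z => ⟪z, Y z⟫ - h (Y z)
  have hsub : ∀ z u, f z + ⟪Y z, u - z⟫ ≤ f u := add_inner_le_of_forall_le hY
  have hgrad : ∀ z, HasGradientAt f (Y z) z :=
    fun z => hasGradientAt_of_forall_add_inner_le hsub hYcont.continuousAt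
  have hYx : ∀ i, Y (x i) = g i :=
    fun i => eq_of_forall_conjugateInterpolant_sub_inner_le hL hint (hY (x i))
  refine ⟨f, convexOn_univ_of_forall_add_inner_le hsub, fun z => (hgrad z).differentiableAt,
    fun u v => ?_, fun i => ?_, fun i => ?_⟩
  · rw [(hgrad u).gradient, (hgrad v).gradient]
    exact hYlip u v
  · simp only [f, hYx, h, conjugateInterpolant_apply_eq hint, real_inner_comm]
    ring
  · rw [(hgrad _).gradient, hYx]

/-- Corollary 1 of the paper (`F_{0,L}`-interpolability):
there exists a convex differentiable function with `L`-Lipschitz gradient interpolating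
the data triples iff `f_i ≥ f_j + ⟪g_j, x_i - x_j⟫ + (1/(2L))‖g_i - g_j‖²` for all `i, j`. -/
theorem smooth_convex_interpolation {d : ℕ} {ι : Type*} [Fintype ι]
    (L : ℝ) (hL : 0 < L)
    (x g : ι → EuclideanSpace ℝ (Fin d)) (fv : ι → ℝ) :
    (∃ f : EuclideanSpace ℝ (Fin d) → ℝ,
        ConvexOn ℝ Set.univ f ∧
        Differentiable ℝ f ∧
        (∀ u v, ‖gradient f u - gradient f v‖ ≤ L * ‖u - v‖) ∧
        (∀ i, f (x i) = fv i) ∧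
        (∀ i, gradient f (x i) = g i)) ↔
      (∀ i j, fv i ≥ fv j + ⟪g j, x i - x j⟫ + 1 / (2 * L) * ‖g i - g j‖ ^ 2) := by
  refine ⟨fun ⟨f, hc, hf, hlip, hfx, hfg⟩ i j => ?_, exists_smooth_convex_interpolant hL x g fv⟩
  simpa only [hfx, hfg] using hc.add_inner_gradient_add_sq_le hL hf hlip (x i) (x j)
end

section
/- Let 0 ≤ μ < ∞, let I be a finite index set, and let (x_i, g_i, f_i) for i ∈ I be triples with x_i, g_i ∈ ℝ^d and f_i ∈ ℝ. Then there exists a function f : ℝ^d → ℝ such that x ↦ f(x) − (μ/2)‖x‖² is convex, f(x_i) = f_i for all i ∈ I, and g_i is a subgradient of f at x_i for all i ∈ I, if and only if f_i ≥ f_j + ⟨g_j, x_i − x_j⟩ + (μ/2)‖x_i − x_j‖² holds for all i, j ∈ I. -/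
/-!
Necessity: `h = f - μ/2‖·‖²` is convex, and the subgradient inequality for `f` at `x` says that
`h` lies above an affine function minus `μ/2‖y - x‖²`. Along a segment from `x`, convexity
shrinks that quadratic error to order `t`, so `h` lies above the affine function itself, which is
the claimed inequality for `f`.
Sufficiency: the maximum of the quadratic minorants `fv j + ⟪g j, y - x j⟫ + μ/2‖y - x j‖²`
interpolates. Subtracting `μ/2‖y‖²` turns every minorant into an affine function, so the maximum
is `μ`-strongly convex, and the interpolation conditions say exactly that the `i`-th minorant is
the active one at `x i`.
-/

open scoped RealInnerProductSpace

open Set Filter Topology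

theorem convexOn_ciSup {ι E : Type*} [Finite ι] [AddCommMonoid E] [Module ℝ E] {s : Set E}
    {f : ι → E → ℝ} (hs : Convex ℝ s) (hf : ∀ i, ConvexOn ℝ s (f i)) :
    ConvexOn ℝ s (fun y => ⨆ i, f i y) := by
  refine ⟨hs, fun y hy z hz a b ha hb hab => ?_⟩
  rcases isEmpty_or_nonempty ι with hι | hι
  · simp
  · refine ciSup_le fun i => ((hf i).2 hy hz ha hb hab).trans ?_
    gcongr
    · exact le_ciSup (f := fun j => f j _) (Finite.bddAbove_range _) i
    · exact le_ciSup (f := fun j => f j _) (Finite.bddAbove_range _) i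

section InnerProductSpace

variable {E : Type*} [NormedAddCommGroup E] [InnerProductSpace ℝ E]

theorem ConvexOn.add_inner_le_of_add_inner_sub_sq_le {h : E → ℝ} (hh : ConvexOn ℝ univ h)
    {x G : E} {c : ℝ} (hq : ∀ y, h x + ⟪G, y - x⟫ - c * ‖y - x‖ ^ 2 ≤ h y) (y : E) :
    h x + ⟪G, y - x⟫ ≤ h y := by
  -- convexity along `[x, y]` reduces the quadratic error by a factor `t`
  have hsegment : ∀ t ∈ Ioc (0 : ℝ) 1, h x + ⟪G, y - x⟫ - c * t * ‖y - x‖ ^ 2 ≤ h y := by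
    rintro t ⟨ht0, ht1⟩
    have hconv := hh.2 (mem_univ x) (mem_univ y) (sub_nonneg.2 ht1) ht0.le (sub_add_cancel 1 t)
    have hlow := hq ((1 - t) • x + t • y)
    have hz : (1 - t) • x + t • y - x = t • (y - x) := by module
    rw [hz, real_inner_smul_right, norm_smul, mul_pow, Real.norm_eq_abs, sq_abs] at hlow
    rw [smul_eq_mul, smul_eq_mul] at hconv
    refine le_of_mul_le_mul_left ?_ ht0
    linarith
  have hlim : Tendsto (fun t : ℝ => h x + ⟪G, y - x⟫ - c * t * ‖y - x‖ ^ 2) (𝓝[>] 0)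
      (𝓝 (h x + ⟪G, y - x⟫)) := by
    have hcont : Continuous fun t : ℝ => h x + ⟪G, y - x⟫ - c * t * ‖y - x‖ ^ 2 := by fun_prop
    exact (hcont.tendsto' 0 _ (by simp)).mono_left nhdsWithin_le_nhds
  exact le_of_tendsto hlim (eventually_of_mem (Ioc_mem_nhdsGT one_pos) hsegment)

noncomputable def strongConvexMinorant (μ : ℝ) (x g : E) (c : ℝ) (y : E) : ℝ :=
  c + ⟪g, y - x⟫ + μ / 2 * ‖y - x‖ ^ 2

theorem add_inner_le_strongConvexMinorant {μ : ℝ} (hμ : 0 ≤ μ) (x g : E) (c : ℝ) (y : E) :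
    c + ⟪g, y - x⟫ ≤ strongConvexMinorant μ x g c y :=
  le_add_of_nonneg_right (by positivity)

theorem strongConvexMinorant_sub_sq (μ : ℝ) (x g : E) (c : ℝ) (y : E) :
    strongConvexMinorant μ x g c y - μ / 2 * ‖y‖ ^ 2
      = c - μ / 2 * ‖x‖ ^ 2 + ⟪g - μ • x, y - x⟫ := by
  have hy : ‖y‖ ^ 2 = ‖x‖ ^ 2 + 2 * ⟪x, y - x⟫ + ‖y - x‖ ^ 2 := by
    simpa using norm_add_sq_real x (y - x)
  rw [strongConvexMinorant, inner_sub_left, real_inner_smul_left, hy]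
  ring

theorem convexOn_strongConvexMinorant_sub_sq (μ : ℝ) (x g : E) (c : ℝ) :
    ConvexOn ℝ univ (fun y => strongConvexMinorant μ x g c y - μ / 2 * ‖y‖ ^ 2) := by
  simp_rw [strongConvexMinorant_sub_sq, inner_sub_right]
  have hlin := ((innerSL ℝ (g - μ • x)).toLinearMap.convexOn convex_univ).add_const
    (c - μ / 2 * ‖x‖ ^ 2 - ⟪g - μ • x, x⟫)
  refine hlin.congr fun y _ => ?_
  simp only [Pi.add_apply, ContinuousLinearMap.coe_coe, innerSL_apply_apply]
  ring

theorem strongConvexMinorant_le {μ : ℝ} {f : E → ℝ} {x g : E}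
    (hf : ConvexOn ℝ univ (fun y => f y - μ / 2 * ‖y‖ ^ 2))
    (hg : ∀ y, f x + ⟪g, y - x⟫ ≤ f y) (y : E) :
    strongConvexMinorant μ x g (f x) y ≤ f y := by
  have hsub : ∀ y, strongConvexMinorant μ x g (f x) y - μ / 2 * ‖y‖ ^ 2
      = (f x - μ / 2 * ‖x‖ ^ 2) + ⟪g - μ • x, y - x⟫ := strongConvexMinorant_sub_sq μ x g (f x)
  have hq : ∀ y, (f x - μ / 2 * ‖x‖ ^ 2) + ⟪g - μ • x, y - x⟫ - μ / 2 * ‖y - x‖ ^ 2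
      ≤ f y - μ / 2 * ‖y‖ ^ 2 := by
    intro y
    rw [← hsub, strongConvexMinorant]
    linarith [hg y]
  have := hf.add_inner_le_of_add_inner_sub_sq_le hq y
  rw [← hsub] at this
  linarith

section Interpolation

variable {ι : Type*} (μ : ℝ) (x g : ι → E) (fv : ι → ℝ)

/-- Written as `μ/2‖y‖²` plus a supremum of affine functions rather than as `⨆ i, minorant i y`,
so that it is also correct for empty `ι`, where `⨆` over reals is `0`. -/
noncomputable def strongConvexInterpolant (y : E) : ℝ :=
  μ / 2 * ‖y‖ ^ 2 + ⨆ i, (strongConvexMinorant μ (x i) (g i) (fv i) y - μ / 2 * ‖y‖ ^ 2)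

variable [Finite ι]

theorem convexOn_strongConvexInterpolant_sub_sq :
    ConvexOn ℝ univ (fun y => strongConvexInterpolant μ x g fv y - μ / 2 * ‖y‖ ^ 2) := by
  simp only [strongConvexInterpolant, add_sub_cancel_left]
  exact convexOn_ciSup convex_univ fun i => convexOn_strongConvexMinorant_sub_sq μ _ _ _

theorem strongConvexMinorant_le_interpolant (i : ι) (y : E) :
    strongConvexMinorant μ (x i) (g i) (fv i) y ≤ strongConvexInterpolant μ x g fv y := by
  rw [strongConvexInterpolant, ← sub_le_iff_le_add']
  exact le_ciSup (f := fun j => strongConvexMinorant μ (x j) (g j) (fv j) y - μ / 2 * ‖y‖ ^ 2)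
    (Finite.bddAbove_range _) i

theorem strongConvexInterpolant_apply
    (h : ∀ i j, strongConvexMinorant μ (x j) (g j) (fv j) (x i) ≤ fv i) (i : ι) :
    strongConvexInterpolant μ x g fv (x i) = fv i := by
  refine le_antisymm ?_ ?_
  · have : Nonempty ι := ⟨i⟩
    rw [strongConvexInterpolant, ← le_sub_iff_add_le']
    exact ciSup_le fun j => sub_le_sub_right (h i j) _
  · simpa [strongConvexMinorant] using strongConvexMinorant_le_interpolant μ x g fv i (x i)

end Interpolation

end InnerProductSpace

/-- Corollary 2 of the paper (`F_{μ,∞}`-interpolability):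
there exists a (possibly nonsmooth) `μ`-strongly convex function interpolating the data
triples (with `g i` a subgradient at `x i`) iff
`f_i ≥ f_j + ⟪g_j, x_i - x_j⟫ + (μ/2)‖x_i - x_j‖²` for all `i, j`. -/
theorem strongly_convex_interpolation {d : ℕ} {ι : Type*} [Fintype ι]
    (μ : ℝ) (hμ : 0 ≤ μ)
    (x g : ι → EuclideanSpace ℝ (Fin d)) (fv : ι → ℝ) :
    (∃ f : EuclideanSpace ℝ (Fin d) → ℝ,
        ConvexOn ℝ Set.univ (fun y => f y - μ / 2 * ‖y‖ ^ 2) ∧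
        (∀ i, f (x i) = fv i) ∧
        (∀ i, ∀ y : EuclideanSpace ℝ (Fin d), f y ≥ f (x i) + ⟪g i, y - x i⟫)) ↔
      (∀ i j, fv i ≥ fv j + ⟪g j, x i - x j⟫ + μ / 2 * ‖x i - x j‖ ^ 2) := by
  constructor
  · rintro ⟨f, hf, hfx, hg⟩ i j
    have hmin := strongConvexMinorant_le hf (hg j) (x i)
    rw [hfx, hfx] at hmin
    exact hmin
  · intro h
    refine ⟨strongConvexInterpolant μ x g fv, convexOn_strongConvexInterpolant_sub_sq μ x g fv,
      strongConvexInterpolant_apply μ x g fv h, fun i y => ?_⟩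
    rw [strongConvexInterpolant_apply μ x g fv h i]
    exact (add_inner_le_strongConvexMinorant hμ (x i) (g i) (fv i) y).trans
      (strongConvexMinorant_le_interpolant μ x g fv i y)
end

section
/- Let 0 ≤ μ < L < ∞ and let f : ℝ^d → ℝ be differentiable, with ∇f L-Lipschitz and with x ↦ f(x) − (μ/2)‖x‖² convex. Then for all x, y ∈ ℝ^d: f(x) − f(y) − ⟨∇f(y), x − y⟩ ≥ (1/(2(1 − μ/L))) · ( (1/L)‖∇f(x) − ∇f(y)‖² + μ‖x − y‖² − (2μ/L)⟨∇f(y) − ∇f(x), y − x⟩ ). -/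
/-!
Subtracting `μ/2 ‖x‖²` turns `f` into a convex function `h` whose gradient `g = ∇f - μ • id`
satisfies the quadratic upper bound with constant `L - μ`. For such an `h`, comparing the
convexity lower bound at `y` with the quadratic upper bound at `x`, both evaluated at the
gradient step `w = x - (g x - g y) / (L - μ)`, gives
`h x ≥ h y + ⟪g y, x - y⟫ + ‖g x - g y‖² / (2 (L - μ))`; adding `μ/2 ‖·‖²` back is the claim.
-/

open scoped RealInnerProductSpace

theorem le_add_deriv_add_half_of_deriv_sub_le {φ φ' : ℝ → ℝ} {K : ℝ}
    (hφ : ∀ t, HasDerivAt φ (φ' t) t) (hφ' : ∀ s t, s ≤ t → φ' t - φ' s ≤ K * (t - s)) :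
    φ 1 ≤ φ 0 + φ' 0 + K / 2 := by
  set q : ℝ → ℝ := fun t => K / 2 * t ^ 2 - φ t
  have hsq (t : ℝ) : HasDerivAt (fun t => K / 2 * t ^ 2) (K * t) t :=
    ((hasDerivAt_pow 2 t).const_mul (K / 2)).congr_deriv
      (by simp only [Nat.add_one_sub_one, pow_one]; ring)
  have hq (t : ℝ) : HasDerivAt q (K * t - φ' t) t := (hsq t).sub (hφ t)
  have hmono : Monotone (deriv q) := fun s t hst => by
    simp only [(hq _).deriv]
    linarith [hφ' s t hst]
  have := (hmono.convexOn_univ_of_deriv fun t => (hq t).differentiableAt).le_slope_of_hasDerivAt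
    (Set.mem_univ 0) (Set.mem_univ 1) one_pos (hq 0)
  simp only [slope_def_field, q, mul_zero, zero_sub, one_pow, mul_one, ne_eq,
    OfNat.ofNat_ne_zero, not_false_eq_true, zero_pow, sub_neg_eq_add, sub_zero, div_one] at this
  linarith

section NormedSpace

variable {F : Type*} [NormedAddCommGroup F] [NormedSpace ℝ F]

theorem ConvexOn.add_fderiv_sub_le {s : Set F} {h : F → ℝ} {h' : F →L[ℝ] ℝ} {x y : F}
    (hconv : ConvexOn ℝ s h) (hx : x ∈ s) (hy : y ∈ s) (hh : HasFDerivAt h h' x) :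
    h x + h' (y - x) ≤ h y := by
  have hline : HasDerivAt (h ∘ AffineMap.lineMap (k := ℝ) x y) (h' (y - x)) 0 := by
    rw [← AffineMap.lineMap_apply_zero x y (k := ℝ)] at hh
    exact hh.comp_hasDerivAt 0 AffineMap.hasDerivAt_lineMap
  have := (hconv.comp_affineMap (AffineMap.lineMap (k := ℝ) x y)).le_slope_of_hasDerivAt
    (by simpa using hx) (by simpa using hy) one_pos hline
  simp only [slope_def_field, Function.comp_apply, AffineMap.lineMap_apply_zero,
    AffineMap.lineMap_apply_one, sub_zero, div_one] at this
  linarith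

theorem le_add_fderiv_add_of_lipschitz {f : F → ℝ} {f' : F → F →L[ℝ] ℝ} {L : ℝ}
    (hf : ∀ z, HasFDerivAt f (f' z) z) (hlip : ∀ x y, ‖f' x - f' y‖ ≤ L * ‖x - y‖) (x y : F) :
    f x ≤ f y + f' y (x - y) + L / 2 * ‖x - y‖ ^ 2 := by
  set z := AffineMap.lineMap (k := ℝ) y x
  have hline (t : ℝ) : HasDerivAt (f ∘ z) (f' (z t) (x - y)) t :=
    (hf _).comp_hasDerivAt t AffineMap.hasDerivAt_lineMap
  have := le_add_deriv_add_half_of_deriv_sub_le hline (K := L * ‖x - y‖ ^ 2) fun s t hst => by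
    have hsub : z t - z s = (t - s) • (x - y) := by
      simp only [z, AffineMap.lineMap_apply_module', sub_smul]; abel
    calc f' (z t) (x - y) - f' (z s) (x - y)
        ≤ ‖f' (z t) - f' (z s)‖ * ‖x - y‖ := by
          rw [← sub_apply]
          exact (Real.le_norm_self _).trans (ContinuousLinearMap.le_opNorm _ _)
      _ ≤ L * ‖(t - s) • (x - y)‖ * ‖x - y‖ := by
          rw [← hsub]; gcongr; exact hlip _ _
      _ = L * ‖x - y‖ ^ 2 * (t - s) := by
          rw [norm_smul, Real.norm_of_nonneg (sub_nonneg.2 hst)]; ring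
  simpa [z, mul_div_right_comm] using this

end NormedSpace

section InnerProductSpace

variable {E : Type*} [NormedAddCommGroup E] [InnerProductSpace ℝ E]

theorem le_add_inner_gradient_add_of_lipschitz [CompleteSpace E] {f : E → ℝ} {L : ℝ}
    (hf : Differentiable ℝ f) (hlip : ∀ x y, ‖gradient f x - gradient f y‖ ≤ L * ‖x - y‖)
    (x y : E) : f x ≤ f y + ⟪gradient f y, x - y⟫ + L / 2 * ‖x - y‖ ^ 2 := by
  rw [inner_gradient_left]
  refine le_add_fderiv_add_of_lipschitz (fun z => (hf z).hasFDerivAt) (fun x y => ?_) x y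
  rw [← toDual_gradient, ← toDual_gradient, ← map_sub, LinearIsometryEquiv.norm_map]
  exact hlip x y

theorem add_inner_gradient_add_le_of_convexOn_sub [CompleteSpace E] {s : Set E} {f : E → ℝ}
    {μ : ℝ} {x y : E} (hsc : ConvexOn ℝ s (fun x => f x - μ / 2 * ‖x‖ ^ 2)) (hx : x ∈ s)
    (hy : y ∈ s) (hf : DifferentiableAt ℝ f y) :
    f y + ⟪gradient f y, x - y⟫ + μ / 2 * ‖x - y‖ ^ 2 ≤ f x := by
  have := hsc.add_fderiv_sub_le hy hx
    (hf.hasFDerivAt.sub ((hasStrictFDerivAt_norm_sq y).hasFDerivAt.const_mul (μ / 2)))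
  simp only [sub_apply, smul_apply, innerSL_apply_apply, smul_eq_mul, nsmul_eq_mul,
    ← inner_gradient_left] at this
  have hnorm : ‖x‖ ^ 2 = ‖y‖ ^ 2 + 2 * ⟪y, x - y⟫ + ‖x - y‖ ^ 2 := by
    rw [← norm_add_sq_real, add_sub_cancel]
  rw [hnorm] at this
  push_cast at this
  linarith

theorem le_of_linear_lower_quadratic_upper {h : E → ℝ} {g : E → E} {M : ℝ} (hM : 0 < M)
    (hlow : ∀ x y, h y + ⟪g y, x - y⟫ ≤ h x)
    (hup : ∀ x y, h x ≤ h y + ⟪g y, x - y⟫ + M / 2 * ‖x - y‖ ^ 2) (x y : E) :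
    h y + ⟪g y, x - y⟫ + 1 / (2 * M) * ‖g x - g y‖ ^ 2 ≤ h x := by
  set d := g x - g y
  have hlow_w := hlow (x - M⁻¹ • d) y
  have hup_w := hup (x - M⁻¹ • d) x
  rw [sub_right_comm, inner_sub_right, real_inner_smul_right] at hlow_w
  rw [sub_sub_cancel_left, inner_neg_right, real_inner_smul_right, norm_neg, norm_smul,
    Real.norm_of_nonneg (inv_nonneg.2 hM.le)] at hup_w
  have hd : M⁻¹ * ⟪g x, d⟫ - M⁻¹ * ⟪g y, d⟫ = M⁻¹ * ‖d‖ ^ 2 := by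
    rw [← mul_sub, ← inner_sub_left, real_inner_self_eq_norm_sq]
  have hM' : 1 / (2 * M) * ‖d‖ ^ 2 = M⁻¹ * ‖d‖ ^ 2 - M / 2 * (M⁻¹ * ‖d‖) ^ 2 := by
    field_simp; ring
  linarith

theorem interpolation_of_quadratic_bounds {f : E → ℝ} {G : E → E} {μ L : ℝ} (hL : L ≠ 0)
    (hμL : μ < L) (hlow : ∀ x y, f y + ⟪G y, x - y⟫ + μ / 2 * ‖x - y‖ ^ 2 ≤ f x)
    (hup : ∀ x y, f x ≤ f y + ⟪G y, x - y⟫ + L / 2 * ‖x - y‖ ^ 2) (x y : E) :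
    f x - f y - ⟪G y, x - y⟫ ≥
      1 / (2 * (1 - μ / L)) *
        (1 / L * ‖G x - G y‖ ^ 2 + μ * ‖x - y‖ ^ 2 - 2 * (μ / L) * ⟪G y - G x, y - x⟫) := by
  set h : E → ℝ := fun z => f z - μ / 2 * ‖z‖ ^ 2
  set g : E → E := fun z => G z - μ • z
  have hh (z : E) : h z = f z - μ / 2 * ‖z‖ ^ 2 := rfl
  have hshift (x y : E) :
      h y + ⟪g y, x - y⟫ = f y + ⟪G y, x - y⟫ + μ / 2 * ‖x - y‖ ^ 2 - μ / 2 * ‖x‖ ^ 2 := by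
    have hnorm : ‖x‖ ^ 2 = ‖y‖ ^ 2 + 2 * ⟪y, x - y⟫ + ‖x - y‖ ^ 2 := by
      rw [← norm_add_sq_real, add_sub_cancel]
    simp only [h, g, inner_sub_left, real_inner_smul_left, hnorm]
    ring
  have hlow' (x y : E) : h y + ⟪g y, x - y⟫ ≤ h x := by
    rw [hshift]; linarith [hlow x y, hh x]
  have hup' (x y : E) : h x ≤ h y + ⟪g y, x - y⟫ + (L - μ) / 2 * ‖x - y‖ ^ 2 := by
    rw [hshift]; linarith [hup x y, hh x]
  have key := le_of_linear_lower_quadratic_upper (sub_pos.2 hμL) hlow' hup' x y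
  have hg : ‖g x - g y‖ ^ 2
      = ‖G x - G y‖ ^ 2 - 2 * μ * ⟪G x - G y, x - y⟫ + μ ^ 2 * ‖x - y‖ ^ 2 := by
    rw [show g x - g y = (G x - G y) - μ • (x - y) by simp only [g, smul_sub]; abel,
      norm_sub_sq_real, real_inner_smul_right, norm_smul, mul_pow, Real.norm_eq_abs, sq_abs]
    ring
  rw [hshift, hg] at key
  have hLμ : L - μ ≠ 0 := (sub_pos.2 hμL).ne'
  have hrhs : 1 / (2 * (1 - μ / L)) *
        (1 / L * ‖G x - G y‖ ^ 2 + μ * ‖x - y‖ ^ 2 - 2 * (μ / L) * ⟪G y - G x, y - x⟫)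
      = 1 / (2 * (L - μ)) *
          (‖G x - G y‖ ^ 2 - 2 * μ * ⟪G x - G y, x - y⟫ + μ ^ 2 * ‖x - y‖ ^ 2)
        + μ / 2 * ‖x - y‖ ^ 2 := by
    rw [← neg_sub (G x), ← neg_sub x, inner_neg_neg]
    field_simp
    ring
  rw [hrhs]
  linarith [hh x]

end InnerProductSpace

/-- Necessity direction of Theorem 4 of the paper, applied pointwise on the whole domain:
any `L`-smooth `μ`-strongly convex function satisfies the interpolation inequality at
every pair of points. -/
theorem smooth_strongly_convex_inequality {d : ℕ} (μ L : ℝ) (hμ : 0 ≤ μ) (hμL : μ < L)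
    (f : EuclideanSpace ℝ (Fin d) → ℝ)
    (hdiff : Differentiable ℝ f)
    (hlip : ∀ x y, ‖gradient f x - gradient f y‖ ≤ L * ‖x - y‖)
    (hsc : ConvexOn ℝ Set.univ (fun x => f x - μ / 2 * ‖x‖ ^ 2)) :
    ∀ x y, f x - f y - ⟪gradient f y, x - y⟫ ≥
      1 / (2 * (1 - μ / L)) *
        (1 / L * ‖gradient f x - gradient f y‖ ^ 2 + μ * ‖x - y‖ ^ 2
          - 2 * (μ / L) * ⟪gradient f y - gradient f x, y - x⟫) :=
  interpolation_of_quadratic_bounds (hμ.trans_lt hμL).ne' hμL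
    (fun _ y => add_inner_gradient_add_le_of_convexOn_sub hsc trivial trivial (hdiff y))
    (le_add_inner_gradient_add_of_lipschitz hdiff hlip)
end

section
/- There is no convex differentiable function f : ℝ → ℝ satisfying simultaneously f(−1) = 1, f′(−1) = −2, f(0) = 0, and f′(0) = −1. -/
/-!
By convexity, the tangent line `y = -x` of `f` at `0` lies below the graph of `f`, and it passes
through `(-1, f (-1)) = (-1, 1)`. Hence `f x + x` attains its minimum at `-1`, which forces
`f' (-1) = -1`.
-/

open Set

theorem ConvexOn.add_deriv_mul_sub_le {S : Set ℝ} {f : ℝ → ℝ} {a x : ℝ} (hf : ConvexOn ℝ S f)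
    (ha : a ∈ S) (hx : x ∈ S) (hfa : DifferentiableAt ℝ f a) :
    f a + deriv f a * (x - a) ≤ f x := by
  rcases lt_trichotomy x a with hxa | rfl | hax
  · have hslope := hf.slope_le_deriv hx ha hxa hfa
    rw [slope_def_field, div_le_iff₀ (sub_pos.2 hxa)] at hslope
    linarith
  · simp
  · have hslope := hf.deriv_le_slope ha hx hax hfa
    rw [slope_def_field, le_div_iff₀ (sub_pos.2 hax)] at hslope
    linarith

theorem deriv_eq_of_forall_add_mul_sub_le {f : ℝ → ℝ} {a m : ℝ} (hfa : DifferentiableAt ℝ f a)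
    (hle : ∀ x, f a + m * (x - a) ≤ f x) :
    deriv f a = m := by
  have hmin : IsLocalMin (fun x => f x - m * (x - a)) a :=
    IsMinOn.isLocalMin (s := univ) (fun x _ => by simp only [mem_ofPred_eq]; linarith [hle x])
      Filter.univ_mem
  have hderiv : HasDerivAt (fun x => f x - m * (x - a)) (deriv f a - m) a := by
    simpa using hfa.hasDerivAt.fun_sub (((hasDerivAt_id' a).sub_const a).const_mul m)
  linarith [hmin.hasDerivAt_eq_zero hderiv]

/-- The one-dimensional counterexample of Section 2.2 of the paper: no convex
differentiable function `f : ℝ → ℝ` satisfies `f(-1) = 1`, `f'(-1) = -2`,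
`f(0) = 0` and `f'(0) = -1`. -/
theorem no_smooth_convex_interpolant_dim1 :
    ¬ ∃ f : ℝ → ℝ, ConvexOn ℝ Set.univ f ∧ Differentiable ℝ f ∧
      f (-1) = 1 ∧ deriv f (-1) = -2 ∧ f 0 = 0 ∧ deriv f 0 = -1 := by
  rintro ⟨f, hconv, hdiff, hf_neg_one, hd_neg_one, hf_zero, hd_zero⟩
  have tangent_at_zero_le : ∀ x, f (-1) + (-1) * (x - (-1)) ≤ f x := fun x => by
    have := hconv.add_deriv_mul_sub_le (mem_univ 0) (mem_univ x) (hdiff 0)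
    rw [hf_zero, hd_zero] at this
    linarith
  have : deriv f (-1) = -1 := deriv_eq_of_forall_add_mul_sub_le (hdiff (-1)) tangent_at_zero_le
  linarith
end

section
/- For every L with 0 < L < ∞, there is no convex differentiable function f : ℝ² → ℝ whose gradient is L-Lipschitz and which satisfies simultaneously f((0,0)) = 0, ∇f((0,0)) = (1,0), f((1,0)) = 1, and ∇f((1,0)) = (1,1). -/
/-!
With `x₀ = (0,0)` and `x₁ = (1,0)`, the data satisfy the subgradient inequality at `x₀` with
equality, `f x₁ = f x₀ + ⟪∇f x₀, x₁ - x₀⟫`. For a differentiable convex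
`f`, the function `f - ⟪∇f x₀, ·⟫` is then minimal at `x₁` as well as at `x₀`, so
`∇f x₁ = ∇f x₀ = (1,0)`, contradicting `∇f x₁ = (1,1)`.
-/

open Set

section Normed

variable {E : Type*} [NormedAddCommGroup E] [NormedSpace ℝ E] {f : E → ℝ} {f' g' : E →L[ℝ] ℝ}
  {x y : E}

theorem ConvexOn.add_apply_sub_le_of_hasFDerivAt (hf : ConvexOn ℝ univ f)
    (hx : HasFDerivAt f f' x) (y : E) : f x + f' (y - x) ≤ f y := by
  let ℓ : ℝ →ᵃ[ℝ] E := AffineMap.lineMap x y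
  have hline : HasDerivAt (f ∘ ℓ) (f' (y - x)) 0 :=
    hx.comp_hasDerivAt_of_eq (0 : ℝ) AffineMap.hasDerivAt_lineMap (by simp [ℓ])
  have hslope := (hf.comp_affineMap ℓ).le_slope_of_hasDerivAt
    (mem_univ (0 : ℝ)) (mem_univ 1) zero_lt_one hline
  simp only [slope_def_field, Function.comp_apply, ℓ, AffineMap.lineMap_apply_one,
    AffineMap.lineMap_apply_zero, sub_zero, div_one] at hslope
  linarith

theorem ConvexOn.hasFDerivAt_eq_of_apply_eq_add (hf : ConvexOn ℝ univ f)
    (hx : HasFDerivAt f f' x) (hy : HasFDerivAt f g' y) (hxy : f y = f x + f' (y - x)) :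
    g' = f' := by
  have hmin : IsLocalMin (fun z => f z - f' z) y := by
    refine IsMinOn.isLocalMin (s := univ) (fun z _ => ?_) Filter.univ_mem
    show f y - f' y ≤ f z - f' z
    have := hf.add_apply_sub_le_of_hasFDerivAt hx z
    simp only [map_sub] at this hxy
    linarith
  exact sub_eq_zero.mp (hmin.hasFDerivAt_eq_zero (hy.sub f'.hasFDerivAt))

end Normed

theorem ConvexOn.gradient_eq_of_apply_eq_add {F : Type*} [NormedAddCommGroup F]
    [InnerProductSpace ℝ F] [CompleteSpace F] {f : F → ℝ} {x y : F} (hf : ConvexOn ℝ univ f)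
    (hx : DifferentiableAt ℝ f x) (hy : DifferentiableAt ℝ f y)
    (hxy : f y = f x + inner ℝ (gradient f x) (y - x)) : gradient f y = gradient f x :=
  (InnerProductSpace.toDual ℝ F).injective <| hf.hasFDerivAt_eq_of_apply_eq_add
    (hasGradientAt_iff_hasFDerivAt.mp hx.hasGradientAt)
    (hasGradientAt_iff_hasFDerivAt.mp hy.hasGradientAt) (by simpa using hxy)

theorem no_smooth_convex_interpolant_dim2_general (L : ℝ) :
    ¬ ∃ f : EuclideanSpace ℝ (Fin 2) → ℝ, ConvexOn ℝ Set.univ f ∧ Differentiable ℝ f ∧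
      (∀ x y, ‖gradient f x - gradient f y‖ ≤ L * ‖x - y‖) ∧
      f ((WithLp.equiv 2 _).symm ![(0:ℝ), 0]) = 0 ∧
      gradient f ((WithLp.equiv 2 _).symm ![(0:ℝ), 0]) = (WithLp.equiv 2 _).symm ![(1:ℝ), 0] ∧
      f ((WithLp.equiv 2 _).symm ![(1:ℝ), 0]) = 1 ∧
      gradient f ((WithLp.equiv 2 _).symm ![(1:ℝ), 0]) = (WithLp.equiv 2 _).symm ![(1:ℝ), 1] := by
  rintro ⟨f, hconv, hdiff, -, hf₀, hg₀, hf₁, hg₁⟩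
  have htouch : f ((WithLp.equiv 2 _).symm ![1, 0]) = f ((WithLp.equiv 2 _).symm ![0, 0]) +
      inner ℝ (gradient f ((WithLp.equiv 2 _).symm ![0, 0]))
        ((WithLp.equiv 2 _).symm ![1, 0] - (WithLp.equiv 2 _).symm ![0, 0]) := by
    rw [hf₀, hf₁, hg₀]
    simp [EuclideanSpace.inner_eq_star_dotProduct]
  have hgrad := hconv.gradient_eq_of_apply_eq_add (hdiff _) (hdiff _) htouch
  rw [hg₀, hg₁] at hgrad
  simpa using congrArg (· 1) hgrad

/-- The two-dimensional counterexample of Section 2.2 of the paper: for every `L > 0`,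
no convex differentiable function `f : ℝ² → ℝ` with `L`-Lipschitz gradient satisfies
`f((0,0)) = 0`, `∇f((0,0)) = (1,0)`, `f((1,0)) = 1` and `∇f((1,0)) = (1,1)`. -/
theorem no_smooth_convex_interpolant_dim2 (L : ℝ) (hL : 0 < L) :
    ¬ ∃ f : EuclideanSpace ℝ (Fin 2) → ℝ, ConvexOn ℝ Set.univ f ∧ Differentiable ℝ f ∧
      (∀ x y, ‖gradient f x - gradient f y‖ ≤ L * ‖x - y‖) ∧
      f ((WithLp.equiv 2 _).symm ![(0:ℝ), 0]) = 0 ∧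
      gradient f ((WithLp.equiv 2 _).symm ![(0:ℝ), 0]) = (WithLp.equiv 2 _).symm ![(1:ℝ), 0] ∧
      f ((WithLp.equiv 2 _).symm ![(1:ℝ), 0]) = 1 ∧
      gradient f ((WithLp.equiv 2 _).symm ![(1:ℝ), 0]) = (WithLp.equiv 2 _).symm ![(1:ℝ), 1] :=
  no_smooth_convex_interpolant_dim2_general L
end

section
/- Let 0 < L < ∞ and R > 0, and consider f : ℝ → ℝ defined by f(x) = (L/2)x², which is convex, differentiable, with L-Lipschitz derivative, and has global minimizer x_* = 0 with f(x_*) = 0. Starting from x_0 = R, the point x_1 = x_0 − (3/(2L)) f′(x_0) satisfies x_1 = −R/2 and f(x_1) − f(x_*) = L R² / 8, so the bound f(x_1) − f(x_*) ≤ L R²/8 for one step of gradient descent with step size 3/(2L) on L-smooth convex functions is attained. -/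
/-- Tightness verification in the 'simple example' of Section 3 of the paper:
on `f(x) = (L/2)x²` (which is `L`-smooth convex with minimizer `0` and minimum value `0`),
one gradient step with step size `3/(2L)` from `x₀ = R` reaches `x₁ = -R/2` and attains
`f(x₁) - f(x⋆) = L R² / 8`. -/
theorem one_step_gradient_bound_attained (L R : ℝ) (hL : 0 < L) (hR : 0 < R)
    (f : ℝ → ℝ) (hf : ∀ t, f t = L / 2 * t ^ 2) :
    ConvexOn ℝ Set.univ f ∧
    Differentiable ℝ f ∧
    (∀ s t, ‖deriv f s - deriv f t‖ ≤ L * ‖s - t‖) ∧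
    (∀ t, f 0 ≤ f t) ∧
    f 0 = 0 ∧
    R - 3 / (2 * L) * deriv f R = -R / 2 ∧
    f (R - 3 / (2 * L) * deriv f R) - f 0 = L * R ^ 2 / 8 := by
  have hfe : f = fun t => L / 2 * t ^ 2 := funext hf
  subst hfe
  have hderiv : ∀ t : ℝ, deriv (fun t => L / 2 * t ^ 2) t = L * t := by
    intro t
    have : HasDerivAt (fun t : ℝ => L / 2 * t ^ 2) (L / 2 * (2 * t)) t := by
      simpa using ((hasDerivAt_pow 2 t).const_mul (L / 2))
    rw [this.deriv]; ring
  have hLne : L ≠ 0 := ne_of_gt hL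
  refine ⟨?_, ?_, ?_, ?_, by norm_num, ?_, ?_⟩
  · have : ConvexOn ℝ Set.univ (fun t : ℝ => t ^ 2) := by
      simpa using (Even.convexOn_pow (by norm_num : Even 2) : ConvexOn ℝ Set.univ fun t : ℝ => t ^ 2)
    simpa using this.smul (by positivity : (0:ℝ) ≤ L / 2)
  · intro t
    exact ((differentiable_pow 2).const_mul (L / 2)).differentiableAt
  · intro s t
    rw [hderiv, hderiv, ← mul_sub, Real.norm_eq_abs, Real.norm_eq_abs, abs_mul,
      abs_of_pos hL]
  · intro t
    simp only
    nlinarith [sq_nonneg t]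
  · rw [hderiv]; field_simp; ring
  · rw [hderiv]; field_simp; ring
end

section
/- Let 0 < L < ∞, R > 0, h ≥ 0, and N ≥ 1, and set γ = R/(2Nh+1). Consider f₁ : ℝ → ℝ defined by f₁(x) = (L/2)x² if |x| ≤ γ and f₁(x) = Lγ|x| − (L/2)γ² if |x| ≥ γ. Then: (i) f₁ is convex, differentiable, and its derivative is L-Lipschitz; (ii) f₁ attains its global minimum value 0 at 0; (iii) the gradient-method iterates x_0 = R, x_{i+1} = x_i − (h/L) f₁′(x_i) for i = 0, …, N−1 satisfy x_i = R(1 − ih/(2Nh+1)) ≥ γ for all 0 ≤ i ≤ N, and f₁(x_N) − f₁(0) = L R² / (2(2Nh+1)). -/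
set_option maxHeartbeats 1000000


/-- Lower-bound computation on the piecewise affine-quadratic worst-case function `f₁`
(Section 4.1.1 of the paper). With `γ = R/(2Nh+1)`, the function `f₁` equal to `(L/2)x²`
for `|x| ≤ γ` and to `Lγ|x| - (L/2)γ²` for `|x| ≥ γ` is `L`-smooth convex with minimum
value `0` at `0`, and the gradient method with constant normalized step size `h ≥ 0`
started at `x₀ = R` stays in the affine zone, with iterates
`x_i = R(1 - ih/(2Nh+1)) ≥ γ` and final accuracy `f₁(x_N) - f₁(0) = LR²/(2(2Nh+1))`. -/
theorem gradient_method_on_piecewise (L R h : ℝ) (hL : 0 < L) (hR : 0 < R) (hh : 0 ≤ h)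
    (N : ℕ) (hN : 1 ≤ N)
    (γ : ℝ) (hγ : γ = R / (2 * N * h + 1))
    (f₁ : ℝ → ℝ)
    (hf₁quad : ∀ t : ℝ, |t| ≤ γ → f₁ t = L / 2 * t ^ 2)
    (hf₁aff : ∀ t : ℝ, γ ≤ |t| → f₁ t = L * γ * |t| - L / 2 * γ ^ 2)
    (x : ℕ → ℝ) (hx0 : x 0 = R)
    (hiter : ∀ i < N, x (i + 1) = x i - h / L * deriv f₁ (x i)) :
    ConvexOn ℝ Set.univ f₁ ∧
    Differentiable ℝ f₁ ∧
    (∀ s t, ‖deriv f₁ s - deriv f₁ t‖ ≤ L * ‖s - t‖) ∧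
    f₁ 0 = 0 ∧ (∀ t, f₁ 0 ≤ f₁ t) ∧
    (∀ i ≤ N, x i = R * (1 - i * h / (2 * N * h + 1)) ∧ γ ≤ x i) ∧
    f₁ (x N) - f₁ 0 = L * R ^ 2 / (2 * (2 * N * h + 1)) := by
  have hNpos : (1:ℝ) ≤ (N:ℝ) := by exact_mod_cast hN
  have hD : (0:ℝ) < 2 * N * h + 1 := by nlinarith
  have hγpos : 0 < γ := by rw [hγ]; positivity
  -- the derivative candidate
  set c : ℝ → ℝ := fun t => L * max (min t γ) (-γ) with hc
  -- zone values of f₁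
  have fquad : ∀ t : ℝ, -γ ≤ t → t ≤ γ → f₁ t = L / 2 * t ^ 2 := fun t h1 h2 =>
    hf₁quad t (abs_le.2 ⟨h1, h2⟩)
  have faffR : ∀ t : ℝ, γ ≤ t → f₁ t = L * γ * t - L / 2 * γ ^ 2 := by
    intro t ht
    have h0 : (0:ℝ) ≤ t := le_trans hγpos.le ht
    rw [hf₁aff t (by rwa [abs_of_nonneg h0]), abs_of_nonneg h0]
  have faffL : ∀ t : ℝ, t ≤ -γ → f₁ t = -(L * γ * t) - L / 2 * γ ^ 2 := by
    intro t ht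
    have h0 : t ≤ 0 := le_trans ht (by linarith)
    rw [hf₁aff t (by rw [abs_of_nonpos h0]; linarith), abs_of_nonpos h0]; ring
  -- zone values of c
  have cmid : ∀ t : ℝ, -γ ≤ t → t ≤ γ → c t = L * t := by
    intro t h1 h2; simp [hc, min_eq_left h2, max_eq_left h1]
  have cR : ∀ t : ℝ, γ ≤ t → c t = L * γ := by
    intro t ht; simp [hc, min_eq_right ht, max_eq_left (by linarith : -γ ≤ γ)]
  have cL : ∀ t : ℝ, t ≤ -γ → c t = -(L * γ) := by
    intro t ht
    show L * (min t γ ⊔ -γ) = -(L * γ)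
    rw [min_eq_left (le_trans ht (by linarith)), max_eq_right ht, mul_neg]
  -- global two-sided quadratic bound
  have key : ∀ s t : ℝ, f₁ t + c t * (s - t) ≤ f₁ s ∧
      f₁ s ≤ f₁ t + c t * (s - t) + L / 2 * (s - t) ^ 2 := by
    intro s t
    rcases le_total t γ with ht1 | ht1
    · rcases le_total (-γ) t with ht2 | ht2
      · -- t in middle zone
        rw [fquad t ht2 ht1, cmid t ht2 ht1]
        rcases le_total s γ with hs1 | hs1
        · rcases le_total (-γ) s with hs2 | hs2
          · rw [fquad s hs2 hs1]
            constructor <;> nlinarith [sq_nonneg (s - t), hL.le,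
              mul_nonneg hL.le (sq_nonneg (s - t))]
          · rw [faffL s hs2]
            constructor <;> nlinarith [mul_nonneg hL.le (sq_nonneg (s + γ)),
              mul_nonneg hL.le (mul_nonneg (by linarith : (0:ℝ) ≤ γ + t)
                (by linarith : (0:ℝ) ≤ -s - (γ - t)/2))]
        · rw [faffR s hs1]
          constructor <;> nlinarith [mul_nonneg hL.le (sq_nonneg (s - γ)),
            mul_nonneg hL.le (mul_nonneg (by linarith : (0:ℝ) ≤ γ - t)
              (by linarith : (0:ℝ) ≤ s - (γ + t)/2))]
      · -- t in left zone
        rw [faffL t ht2, cL t ht2]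
        rcases le_total s γ with hs1 | hs1
        · rcases le_total (-γ) s with hs2 | hs2
          · rw [fquad s hs2 hs1]
            constructor <;> nlinarith [mul_nonneg hL.le (sq_nonneg (s + γ)),
              mul_nonneg hL.le (mul_nonneg (by linarith : (0:ℝ) ≤ -γ - t)
                (by linarith : (0:ℝ) ≤ 2*s + γ - t))]
          · rw [faffL s hs2]
            constructor <;> nlinarith [mul_nonneg hL.le (sq_nonneg (s - t)), hγpos.le]
        · rw [faffR s hs1]
          constructor <;> nlinarith [mul_nonneg hL.le (sq_nonneg (s - γ)),
            mul_nonneg hL.le (mul_nonneg (by linarith : (0:ℝ) ≤ -t - γ)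
              (by linarith : (0:ℝ) ≤ 2*s - t - (-γ))),
            mul_nonneg hL.le (mul_nonneg hγpos.le (by linarith : (0:ℝ) ≤ s - γ))]
    · -- t in right zone
      rw [faffR t ht1, cR t ht1]
      rcases le_total s γ with hs1 | hs1
      · rcases le_total (-γ) s with hs2 | hs2
        · rw [fquad s hs2 hs1]
          constructor <;> nlinarith [mul_nonneg hL.le (sq_nonneg (s - γ)),
            mul_nonneg hL.le (mul_nonneg (by linarith : (0:ℝ) ≤ t - γ)
              (by linarith : (0:ℝ) ≤ t + γ - 2*s))]
        · rw [faffL s hs2]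
          constructor <;> nlinarith [mul_nonneg hL.le (sq_nonneg (s + γ)),
            mul_nonneg hL.le (mul_nonneg (by linarith : (0:ℝ) ≤ t - γ)
              (by linarith : (0:ℝ) ≤ t + γ - 2*s)),
            mul_nonneg hL.le (mul_nonneg hγpos.le (by linarith : (0:ℝ) ≤ -s - γ))]
      · rw [faffR s hs1]
        constructor <;> nlinarith [mul_nonneg hL.le (sq_nonneg (s - t))]
  -- differentiability with derivative c
  have hder : ∀ t : ℝ, HasDerivAt f₁ (c t) t := by
    intro t
    rw [hasDerivAt_iff_isLittleO]
    have hO : (fun s => f₁ s - f₁ t - (s - t) • c t) =O[nhds t] fun s => (s - t) * (s - t) := by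
      rw [Asymptotics.isBigO_iff]
      refine ⟨L / 2, Filter.Eventually.of_forall fun s => ?_⟩
      obtain ⟨h1, h2⟩ := key s t
      have : |f₁ s - f₁ t - (s - t) * c t| ≤ L / 2 * (s - t) ^ 2 := by
        rw [abs_le]; constructor <;> nlinarith
      simpa [Real.norm_eq_abs, abs_mul, sq, mul_comm (c t)] using this
    refine hO.trans_isLittleO ?_
    have ho : (fun s : ℝ => s - t) =o[nhds t] (fun _ => (1:ℝ)) := by
      rw [Asymptotics.isLittleO_one_iff]
      simpa using (continuous_sub_right t).tendsto t
    simpa using ho.mul_isBigO (Asymptotics.isBigO_refl (fun s : ℝ => s - t) (nhds t))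
  have hdiff : Differentiable ℝ f₁ := fun t => (hder t).differentiableAt
  have hderiv : deriv f₁ = c := funext fun t => (hder t).deriv
  -- convexity
  have hconv : ConvexOn ℝ Set.univ f₁ := by
    refine ⟨convex_univ, fun a _ b _ p q hp hq hpq => ?_⟩
    simp only [smul_eq_mul]
    set z := p * a + q * b with hz_def
    have h1 := (key a z).1
    have h2 := (key b z).1
    have hz : p * (a - z) + q * (b - z) = 0 := by
      simp only [hz_def]; linear_combination (-(p * a + q * b)) * hpq
    have e1 := mul_le_mul_of_nonneg_left h1 hp
    have e2 := mul_le_mul_of_nonneg_left h2 hq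
    calc f₁ z = (p + q) * f₁ z + c z * (p * (a - z) + q * (b - z)) := by
          rw [hpq, hz]; ring
      _ = p * (f₁ z + c z * (a - z)) + q * (f₁ z + c z * (b - z)) := by ring
      _ ≤ p * f₁ a + q * f₁ b := add_le_add e1 e2
  -- Lipschitz derivative
  have hlip : ∀ s t : ℝ, ‖deriv f₁ s - deriv f₁ t‖ ≤ L * ‖s - t‖ := by
    intro s t
    rw [hderiv]
    simp only [hc, Real.norm_eq_abs]
    have hmin : |min s γ - min t γ| ≤ |s - t| := by
      have := abs_max_sub_max_le_abs (-s) (-t) (-γ)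
      rw [max_neg_neg, max_neg_neg] at this
      calc |min s γ - min t γ| = |(-(s ⊓ γ)) - (-(t ⊓ γ))| := by rw [abs_sub_comm]; ring_nf
        _ ≤ |(-s) - (-t)| := this
        _ = |s - t| := by rw [abs_sub_comm]; ring_nf
    calc |L * max (min s γ) (-γ) - L * max (min t γ) (-γ)|
        = L * |max (min s γ) (-γ) - max (min t γ) (-γ)| := by
          rw [← mul_sub, abs_mul, abs_of_pos hL]
      _ ≤ L * |min s γ - min t γ| :=
          mul_le_mul_of_nonneg_left (abs_max_sub_max_le_abs _ _ _) hL.le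
      _ ≤ L * |s - t| := mul_le_mul_of_nonneg_left hmin hL.le
  -- minimum at 0
  have hf0 : f₁ 0 = 0 := by
    rw [hf₁quad 0 (by simpa using hγpos.le)]; ring
  have hmin : ∀ t, f₁ 0 ≤ f₁ t := by
    intro t
    have := (key t 0).1
    rwa [cmid 0 (by linarith) hγpos.le, mul_zero, zero_mul, add_zero] at this
  -- iterates
  have hx : ∀ i ≤ N, x i = R * (1 - i * h / (2 * N * h + 1)) ∧ γ ≤ x i := by
    intro i hi
    induction i with
    | zero =>
      refine ⟨by simp [hx0], ?_⟩
      rw [hx0, hγ, div_le_iff₀ hD]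
      nlinarith [mul_nonneg (mul_nonneg (by positivity : (0:ℝ) ≤ 2 * N) hh) hR.le]
    | succ n ih =>
      have hn : n ≤ N := by omega
      obtain ⟨he, hge⟩ := ih hn
      have hstep : x (n + 1) = x n - h * γ := by
        rw [hiter n (by omega), hderiv, cR (x n) hge]
        field_simp
      have hformula : x (n + 1) = R * (1 - (↑(n+1)) * h / (2 * N * h + 1)) := by
        rw [hstep, he, hγ]
        push_cast
        field_simp
        ring
      refine ⟨hformula, ?_⟩
      rw [hformula, hγ]
      have hn1 : ((n:ℝ) + 1) ≤ (N:ℝ) := by exact_mod_cast Nat.succ_le_of_lt (by omega)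
      have key2 : (1:ℝ) ≤ 2 * (N:ℝ) * h + 1 - ((n:ℝ) + 1) * h := by
        nlinarith [mul_nonneg (by linarith : (0:ℝ) ≤ 2 * (N:ℝ) - ((n:ℝ)+1)) hh]
      rw [div_le_iff₀ hD]
      push_cast
      have expand : R * (1 - ((n:ℝ) + 1) * h / (2 * (N:ℝ) * h + 1)) * (2 * (N:ℝ) * h + 1)
          = R * (2 * (N:ℝ) * h + 1 - ((n:ℝ) + 1) * h) := by
        field_simp
      rw [expand]
      nlinarith [mul_le_mul_of_nonneg_left key2 hR.le]
  -- final accuracy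
  have hxN := hx N le_rfl
  have hfxN : f₁ (x N) = L * γ * x N - L / 2 * γ ^ 2 := faffR (x N) hxN.2
  rw [hfxN, hxN.1] at *
  refine ⟨hconv, hdiff, hlip, hf0, hmin, hx, ?_⟩
  rw [hf0, hγ]
  field_simp
  ring
end

section
/- Let N ≥ 0, let n = N+2, and let Q be the n×n symmetric tridiagonal matrix with Q_{ii} = 2 for all i and Q_{i,i+1} = Q_{i+1,i} = 1, all other entries zero. Let R > 0, define f(x) = (1/2) xᵀQx, set x_0 = R e_1 (where e_1 is the first standard basis vector of ℝ^n), and generate iterates x_i = x_0 − Σ_{k=0}^{i−1} h_{i,k} g_k and gradients g_i = Q x_i for i = 0, …, N, where the real coefficients satisfy h_{i,i−1} ≠ 0 for all i ∈ {1, …, N}. Then the n vectors x_0, g_0, g_1, …, g_N are linearly independent in ℝ^n. -/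
/-!
Order the vectors as `v₀ = x₀`, `v_{k+1} = g_k`. Since `Q` is tridiagonal, multiplying by `Q`
moves the last nonzero coordinate of a vector one step down, scaled by the subdiagonal entry `1`;
and the update `x_i = x₀ - ∑ h_{i,k} g_k` has its last nonzero coordinate at `i`, coming from the
single term `h_{i,i-1} g_{i-1} ≠ 0`. By induction `v_k` has its last nonzero coordinate at `k`, so
the matrix with rows `v_k` is lower triangular with nonzero diagonal.
-/

open Finset Matrix

def IsLastNonzeroAt {K : Type*} [Zero K] {n : ℕ} (v : Fin n → K) (i : ℕ) : Prop :=
  (∀ j : Fin n, i < j → v j = 0) ∧ ∀ j : Fin n, (j : ℕ) = i → v j ≠ 0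

section

variable {K : Type*} {n : ℕ}

theorem isLastNonzeroAt_single [Zero K] {i : Fin n} {a : K} (ha : a ≠ 0) :
    IsLastNonzeroAt (Pi.single i a) i :=
  ⟨fun j hj => by rw [Pi.single_apply, if_neg (Fin.ne_of_gt hj)],
    fun j hj => by rwa [Fin.ext hj, Pi.single_eq_same]⟩

theorem linearIndependent_of_isLastNonzeroAt [CommRing K] [IsDomain K] {v : Fin n → Fin n → K}
    (hv : ∀ i, IsLastNonzeroAt (v i) i) : LinearIndependent K v := by
  have hlower : (of v).IsLowerTriangular := fun i j => (hv i).1 j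
  refine linearIndependent_rows_of_det_ne_zero (A := of v) ?_
  rw [det_of_isLowerTriangular _ hlower, prod_ne_zero_iff]
  exact fun i _ => (hv i).2 i rfl

theorem IsLastNonzeroAt.mulVec [Semiring K] [NoZeroDivisors K] {Q : Matrix (Fin n) (Fin n) K}
    (hband : ∀ j k : Fin n, (k : ℕ) + 1 < j → Q j k = 0)
    (hsub : ∀ j k : Fin n, (j : ℕ) = k + 1 → Q j k ≠ 0)
    {x : Fin n → K} {i : ℕ} (hx : IsLastNonzeroAt x i) : IsLastNonzeroAt (Q *ᵥ x) (i + 1) := by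
  have hterm : ∀ j k : Fin n, (k : ℕ) ≠ i → i + 1 ≤ j → Q j k * x k = 0 := by
    intro j k hk hj
    rcases lt_or_gt_of_ne hk with hk | hk
    · rw [hband j k (by omega), zero_mul]
    · rw [hx.1 k hk, mul_zero]
  have hsingle : ∀ (j : Fin n) (hj : i + 1 ≤ j), (Q *ᵥ x) j = Q j ⟨i, by omega⟩ * x ⟨i, by omega⟩ :=
    fun j hj => sum_eq_single_of_mem _ (mem_univ _) fun k _ hk =>
      hterm j k (fun h => hk (Fin.ext h)) hj
  refine ⟨fun j hj => ?_, fun j hj => ?_⟩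
  · rw [hsingle j hj.le, hband j _ hj, zero_mul]
  · rw [hsingle j hj.ge]
    exact mul_ne_zero (hsub j _ hj) (hx.2 _ rfl)

theorem isLastNonzeroAt_sub_sum_smul [Ring K] [NoZeroDivisors K] {x₀ : Fin n → K}
    {g : ℕ → Fin n → K} {c : ℕ → K} {m : ℕ} (hx₀ : IsLastNonzeroAt x₀ 0)
    (hg : ∀ k ≤ m, IsLastNonzeroAt (g k) (k + 1)) (hc : c m ≠ 0) :
    IsLastNonzeroAt (x₀ - ∑ k ∈ range (m + 1), c k • g k) (m + 1) := by
  simp only [IsLastNonzeroAt, Pi.sub_apply, Finset.sum_apply, Pi.smul_apply, smul_eq_mul]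
  refine ⟨fun j hj => ?_, fun j hj => ?_⟩
  · rw [hx₀.1 j (by omega), sum_eq_zero, sub_zero]
    intro k hk
    rw [mem_range] at hk
    rw [(hg k (by omega)).1 j (by omega), mul_zero]
  · rw [hx₀.1 j (by omega), sum_range_succ, sum_eq_zero, zero_add, zero_sub, neg_ne_zero]
    · exact mul_ne_zero hc ((hg m le_rfl).2 j hj)
    · intro k hk
      rw [mem_range] at hk
      rw [(hg k (by omega)).1 j (by omega), mul_zero]

end

/-- Slater-point construction in the proof of Theorem 6 of the paper: applying a
fixed-step first-order method with `h i (i-1) ≠ 0` to the quadratic `f(x) = ½ xᵀQx`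
(with `Q` the tridiagonal matrix with `2` on the diagonal and `1` on the sub- and
super-diagonals) started from `x₀ = R e₁` yields vectors `x₀, g₀, …, g_N` that are
linearly independent in `ℝ^{N+2}`. -/
theorem slater_point_construction (N : ℕ) (R : ℝ) (hR : 0 < R)
    (h : ℕ → ℕ → ℝ) (hH : ∀ i, 1 ≤ i → i ≤ N → h i (i - 1) ≠ 0)
    (Q : Matrix (Fin (N + 2)) (Fin (N + 2)) ℝ)
    (hQ : ∀ i j : Fin (N + 2), Q i j =
      if (i : ℕ) = (j : ℕ) then 2
      else if (i : ℕ) + 1 = (j : ℕ) ∨ (j : ℕ) + 1 = (i : ℕ) then 1 else 0)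
    (x g : ℕ → (Fin (N + 2) → ℝ))
    (hx0 : x 0 = fun j => if j = 0 then R else 0)
    (hg : ∀ i ≤ N, g i = Q.mulVec (x i))
    (hx : ∀ i, 1 ≤ i → i ≤ N → x i = x 0 - ∑ k ∈ Finset.range i, h i k • g k) :
    LinearIndependent ℝ
      (Fin.cons (x 0) (fun k : Fin (N + 1) => g (k : ℕ)) : Fin (N + 2) → (Fin (N + 2) → ℝ)) := by
  have hband : ∀ j k : Fin (N + 2), (k : ℕ) + 1 < j → Q j k = 0 := by
    intro j k hjk
    rw [hQ, if_neg (by omega), if_neg (by omega)]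
  have hsub : ∀ j k : Fin (N + 2), (j : ℕ) = k + 1 → Q j k ≠ 0 := by
    intro j k hjk
    rw [hQ, if_neg (by omega), if_pos (Or.inr hjk.symm)]
    exact one_ne_zero
  have hx₀ : IsLastNonzeroAt (x 0) 0 := by
    rw [hx0, ← funext (Pi.single_apply (0 : Fin (N + 2)) R)]
    exact isLastNonzeroAt_single hR.ne'
  have hxg : ∀ i ≤ N, IsLastNonzeroAt (x i) i ∧ IsLastNonzeroAt (g i) (i + 1) := by
    intro i
    induction i using Nat.strong_induction_on with
    | _ i ih =>
      intro hi
      have hxi : IsLastNonzeroAt (x i) i := by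
        rcases i with _ | m
        · exact hx₀
        · rw [hx (m + 1) (by omega) hi]
          exact isLastNonzeroAt_sub_sum_smul hx₀ (fun k hk => (ih k (by omega) (by omega)).2)
            (hH (m + 1) (by omega) hi)
      exact ⟨hxi, hg i hi ▸ hxi.mulVec hband hsub⟩
  refine linearIndependent_of_isLastNonzeroAt fun a => ?_
  cases a using Fin.cases with
  | zero => exact hx₀
  | succ k => simpa using (hxg k (by omega)).2
end

section
/- Let N ≥ 1 be an integer and suppose h ∈ ℝ satisfies 1 < h < 2 and 1/(2Nh+1) = (1−h)^{2N}. Then 1 + (1+4N)^{−1/(2N)} ≤ h ≤ 1 + (1+2N)^{−1/(2N)}. -/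
/-- Auxiliary: `((x) ^ (-(1:ℝ)/(2N))) ^ (2N : ℕ) = 1/x` for `x > 0`, `N ≥ 1`. -/
lemma rpow_aux (N : ℕ) (hN : 1 ≤ N) (x : ℝ) (hx : 0 < x) :
    (x ^ (-(1 : ℝ) / (2 * N))) ^ (2 * N) = 1 / x := by
  have hne : (2 * (N : ℝ)) ≠ 0 := by positivity
  rw [← Real.rpow_natCast (x ^ (-(1 : ℝ) / (2 * N))) (2 * N),
    ← Real.rpow_mul hx.le]
  push_cast
  rw [div_mul_cancel₀ _ hne, Real.rpow_neg_one, one_div]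

/-- Tight lower and upper estimates (equation (19) in Section 4.1.1 of the paper) on the
optimal step size `h_opt(N)` of the gradient method, defined as the solution in `(1,2)`
of `1/(2Nh+1) = (1-h)^{2N}`. -/
theorem optimal_step_size_estimates (N : ℕ) (hN : 1 ≤ N) (h : ℝ)
    (h1 : 1 < h) (h2 : h < 2)
    (heq : 1 / (2 * N * h + 1) = (1 - h) ^ (2 * N)) :
    1 + (1 + 4 * (N : ℝ)) ^ (-(1 : ℝ) / (2 * N)) ≤ h ∧
      h ≤ 1 + (1 + 2 * (N : ℝ)) ^ (-(1 : ℝ) / (2 * N)) := by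
  have hN' : (1 : ℝ) ≤ (N : ℝ) := by exact_mod_cast hN
  have hden : (0 : ℝ) < 2 * N * h + 1 := by nlinarith
  have hkey : (h - 1) ^ (2 * N) = 1 / (2 * N * h + 1) := by
    rw [heq]
    have : (1 - h) = -(h - 1) := by ring
    rw [this, Even.neg_pow (even_two_mul N)]
  have ht0 : (0 : ℝ) ≤ h - 1 := by linarith
  have hne2N : 2 * N ≠ 0 := by omega
  constructor
  · -- lower bound
    have hx : (0 : ℝ) < 1 + 4 * N := by linarith
    have ha0 : (0 : ℝ) ≤ (1 + 4 * (N : ℝ)) ^ (-(1 : ℝ) / (2 * N)) :=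
      Real.rpow_nonneg hx.le _
    have hcmp : ((1 + 4 * (N : ℝ)) ^ (-(1 : ℝ) / (2 * N))) ^ (2 * N)
        ≤ (h - 1) ^ (2 * N) := by
      rw [rpow_aux N hN _ hx, hkey]
      apply div_le_div_of_nonneg_left (by norm_num) hden
      nlinarith
    have := le_of_pow_le_pow_left₀ hne2N ht0 hcmp
    linarith
  · -- upper bound
    have hx : (0 : ℝ) < 1 + 2 * N := by linarith
    have hb0 : (0 : ℝ) ≤ (1 + 2 * (N : ℝ)) ^ (-(1 : ℝ) / (2 * N)) :=
      Real.rpow_nonneg hx.le _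
    have hcmp : (h - 1) ^ (2 * N)
        ≤ ((1 + 2 * (N : ℝ)) ^ (-(1 : ℝ) / (2 * N))) ^ (2 * N) := by
      rw [rpow_aux N hN _ hx, hkey]
      apply div_le_div_of_nonneg_left (by norm_num) hx
      nlinarith
    have := le_of_pow_le_pow_left₀ hne2N hb0 hcmp
    linarith
end
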